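/- arXiv:2207.02675 — 3 statements merged into one kernel-verified Lean document; each statement's English description precedes it below -/
import Mathlib

section
/- Let S = ⟨a₁,…,a_r, a_{r+1},…,aₙ⟩ ⊆ ℕ^r be a simplicial affine semigroup with extremal rays a₁,…,a_r and E = {a₁,…,a_r}. Then dim_k k[x₁,…,xₙ]/(I_S + ⟨x₁,…,x_r⟩) = |Ap(S, E)|. -/
open MvPolynomial

variable (𝕜 : Type) [Field 𝕜]

/-- The affine semigroup `S = ⟨a₁, …, aₙ⟩ ⊆ ℕ^r`, viewed inside `ℤ^r` so that differences
make sense. -/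
def Sgen {n r : ℕ} (a : Fin n → Fin r → ℕ) : AddSubmonoid (Fin r → ℤ) :=
  AddSubmonoid.closure (Set.range fun i => fun j => (a i j : ℤ))

/-- The Apéry set `Ap(S, E) = {x ∈ S | ∀ e ∈ E, x − e ∉ S}`. -/
def aperySet {r : ℕ} (S : AddSubmonoid (Fin r → ℤ)) (E : Set (Fin r → ℤ)) :
    Set (Fin r → ℤ) :=
  {x | x ∈ S ∧ ∀ e ∈ E, x - e ∉ S}

/-- The set of extremal rays `{a₁, …, a_r}` (the first `r` generators). -/
def extremalSet {n r : ℕ} (a : Fin n → Fin r → ℕ) : Set (Fin r → ℤ) :=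
  {x | ∃ i : Fin n, (i : ℕ) < r ∧ x = fun j => (a i j : ℤ)}

/-- `S` is simplicial with respect to its first `r` generators: they are `ℚ`-linearly
independent and every element of `S` has a positive multiple in the submonoid they generate. -/
def isSimplicial {n r : ℕ} (hrn : r ≤ n) (a : Fin n → Fin r → ℕ) : Prop :=
  LinearIndependent ℚ (fun i : Fin r => fun j => (a (Fin.castLE hrn i) j : ℚ)) ∧
  ∀ s ∈ Sgen a, ∃ α : ℕ, 0 < α ∧
    (α : ℤ) • s ∈ AddSubmonoid.closure (extremalSet a)

/-- The toric (defining) ideal `I_S ⊆ 𝕜[x₁, …, xₙ]`, the kernel of `xᵢ ↦ t^{aᵢ}`. -/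
noncomputable def toricIdealGen {n r : ℕ} (a : Fin n → Fin r → ℕ) :
    Ideal (MvPolynomial (Fin n) 𝕜) :=
  RingHom.ker ((aeval fun i : Fin n =>
      (monomial (Finsupp.equivFunOnFinite.symm (a i)) (1 : 𝕜) : MvPolynomial (Fin r) 𝕜)) :
    MvPolynomial (Fin n) 𝕜 →ₐ[𝕜] MvPolynomial (Fin r) 𝕜)

/-! ### Auxiliary development -/

section Aux

variable {n r : ℕ}

/-- Coercion `ℕ^r → ℤ^r` of exponent vectors. -/
def coeZ {r : ℕ} (d : Fin r →₀ ℕ) : Fin r → ℤ := fun j => (d j : ℤ)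

lemma coeZ_injective {r : ℕ} : Function.Injective (coeZ (r := r)) := fun d e h =>
  Finsupp.ext fun j => Int.natCast_inj.mp (congrFun h j)

lemma mem_Sgen_iff (a : Fin n → Fin r → ℕ) (s : Fin r → ℤ) :
    s ∈ Sgen a ↔ ∃ u : Fin n → ℕ, ∑ i, (u i : ℤ) • (fun j => (a i j : ℤ)) = s := by
  constructor
  · intro hs
    induction hs using AddSubmonoid.closure_induction with
    | mem x hx =>
      obtain ⟨i, rfl⟩ := hx
      exact ⟨Pi.single i 1, by simp [Pi.single_apply, Finset.sum_ite_eq', ite_smul]⟩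
    | zero => exact ⟨0, by simp⟩
    | add x y _ _ hx hy =>
      obtain ⟨u, rfl⟩ := hx; obtain ⟨v, rfl⟩ := hy
      exact ⟨u + v, by simp [add_smul, Finset.sum_add_distrib]⟩
  · rintro ⟨u, rfl⟩
    refine AddSubmonoid.sum_mem _ fun i _ => ?_
    rw [natCast_zsmul]
    exact nsmul_mem (AddSubmonoid.subset_closure (Set.mem_range_self i)) _

/-- The degree map `u ↦ ∑ uᵢ aᵢ`. -/
noncomputable def degZ (a : Fin n → Fin r → ℕ) (u : Fin n →₀ ℕ) : Fin r →₀ ℕ :=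
  ∑ i, u i • Finsupp.equivFunOnFinite.symm (a i)

lemma degZ_apply (a : Fin n → Fin r → ℕ) (u : Fin n →₀ ℕ) (j : Fin r) :
    degZ a u j = ∑ i, u i * a i j := by
  simp [degZ, Finset.sum_apply', Finsupp.smul_apply]

lemma coeZ_degZ (a : Fin n → Fin r → ℕ) (u : Fin n →₀ ℕ) :
    coeZ (degZ a u) = ∑ i, ((u i : ℤ)) • (fun j => (a i j : ℤ)) := by
  funext j
  rw [Finset.sum_apply]
  simp only [coeZ, degZ_apply, Pi.smul_apply, smul_eq_mul]
  push_cast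
  rfl

lemma coeZ_degZ_mem (a : Fin n → Fin r → ℕ) (u : Fin n →₀ ℕ) :
    coeZ (degZ a u) ∈ Sgen a :=
  (mem_Sgen_iff a _).2 ⟨u, (coeZ_degZ a u).symm⟩

lemma exists_degZ (a : Fin n → Fin r → ℕ) {s : Fin r → ℤ} (hs : s ∈ Sgen a) :
    ∃ u : Fin n →₀ ℕ, coeZ (degZ a u) = s := by
  obtain ⟨u, hu⟩ := (mem_Sgen_iff a s).1 hs
  refine ⟨Finsupp.equivFunOnFinite.symm u, ?_⟩
  rw [coeZ_degZ]
  simpa using hu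

lemma Sgen_nonneg (a : Fin n → Fin r → ℕ) {s : Fin r → ℤ} (hs : s ∈ Sgen a) (j : Fin r) :
    0 ≤ s j := by
  obtain ⟨u, rfl⟩ := (mem_Sgen_iff a s).1 hs
  rw [Finset.sum_apply]
  refine Finset.sum_nonneg fun i _ => ?_
  simp only [Pi.smul_apply, smul_eq_mul]
  positivity

/-- The semigroup-algebra morphism `𝕜[x₁,…,xₙ] → 𝕜[t₁,…,t_r]`. -/
noncomputable def phiS (a : Fin n → Fin r → ℕ) :
    MvPolynomial (Fin n) 𝕜 →ₐ[𝕜] MvPolynomial (Fin r) 𝕜 :=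
  aeval fun i : Fin n =>
    (monomial (Finsupp.equivFunOnFinite.symm (a i)) (1 : 𝕜) : MvPolynomial (Fin r) 𝕜)

lemma toricIdealGen_eq (a : Fin n → Fin r → ℕ) :
    toricIdealGen 𝕜 a = RingHom.ker (phiS 𝕜 a) := rfl

lemma prod_monomial_one {σ R ι : Type*} [CommSemiring R] (s : Finset ι) (g : ι → (σ →₀ ℕ)) :
    (∏ i ∈ s, (monomial (g i) (1 : R))) = monomial (∑ i ∈ s, g i) 1 := by
  induction s using Finset.cons_induction with
  | empty => simp [monomial_zero']
  | cons i s hi ih => rw [Finset.prod_cons, Finset.sum_cons, ih, monomial_mul, one_mul]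

lemma phiS_monomial (a : Fin n → Fin r → ℕ) (u : Fin n →₀ ℕ) (c : 𝕜) :
    phiS 𝕜 a (monomial u c) = monomial (degZ a u) c := by
  rw [phiS, aeval_monomial, Finsupp.prod_fintype _ _ (fun i => by simp)]
  simp_rw [monomial_pow, one_pow]
  rw [prod_monomial_one, algebraMap_eq, C_mul_monomial, mul_one, degZ]

lemma coeZ_mem_of_mem_support (a : Fin n → Fin r → ℕ) (f : MvPolynomial (Fin n) 𝕜)
    {d : Fin r →₀ ℕ} (hd : d ∈ (phiS 𝕜 a f).support) : coeZ d ∈ Sgen a := by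
  classical
  have hf : phiS 𝕜 a f = ∑ u ∈ f.support, monomial (degZ a u) (coeff u f) := by
    conv_lhs => rw [f.as_sum, map_sum]
    simp_rw [phiS_monomial]
  rw [hf] at hd
  obtain ⟨u, -, hu⟩ := Finset.mem_biUnion.mp (MvPolynomial.support_sum hd)
  obtain rfl := Finset.mem_singleton.mp (support_monomial_subset hu)
  exact coeZ_degZ_mem a u

lemma coeff_eq_zero_of_mem {n r : ℕ} (hrn : r ≤ n) (a : Fin n → Fin r → ℕ)
    (f : MvPolynomial (Fin n) 𝕜)
    (hf : f ∈ toricIdealGen 𝕜 a ⊔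
      Ideal.span (Set.range fun m : Fin r => (X (Fin.castLE hrn m) : MvPolynomial (Fin n) 𝕜)))
    (d : Fin r →₀ ℕ) (hd : coeZ d ∈ aperySet (Sgen a) (extremalSet a)) :
    coeff d (phiS 𝕜 a f) = 0 := by
  classical
  rw [Submodule.mem_sup] at hf
  obtain ⟨g, hg, h, hh, rfl⟩ := hf
  rw [toricIdealGen_eq, RingHom.mem_ker] at hg
  rw [map_add, coeff_add, hg, coeff_zero, zero_add]
  rw [Ideal.mem_span_range_iff_exists_fun] at hh
  obtain ⟨c, rfl⟩ := hh
  rw [map_sum, coeff_sum]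
  refine Finset.sum_eq_zero fun m _ => ?_
  rw [map_mul]
  have hx : phiS 𝕜 a (X (Fin.castLE hrn m)) =
      monomial (Finsupp.equivFunOnFinite.symm (a (Fin.castLE hrn m))) 1 := aeval_X _ _
  rw [hx, coeff_mul_monomial']
  set A := Finsupp.equivFunOnFinite.symm (a (Fin.castLE hrn m)) with hA
  split_ifs with hle
  · rcases eq_or_ne (coeff (d - A) (phiS 𝕜 a (c m))) 0 with h0 | h0
    · rw [h0, zero_mul]
    · exfalso
      have hmemS : coeZ (d - A) ∈ Sgen a :=
        coeZ_mem_of_mem_support 𝕜 a _ (MvPolynomial.mem_support_iff.mpr h0)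
      have hsub : coeZ (d - A) = coeZ d - coeZ A := by
        funext j
        have hj : A j ≤ d j := hle j
        simp only [coeZ, Finsupp.tsub_apply, Pi.sub_apply]
        omega
      have hE : coeZ A ∈ extremalSet a :=
        ⟨Fin.castLE hrn m, by simpa using m.2, by funext j; simp [coeZ, hA]⟩
      rw [hsub] at hmemS
      exact hd.2 (coeZ A) hE hmemS
  · rfl

end Aux

/-- For a simplicial affine semigroup `S ⊆ ℕ^r` with extremal rays `a₁, …, a_r`,
`dim_𝕜 𝕜[x₁,…,xₙ]/(I_S + ⟨x₁,…,x_r⟩) = |Ap(S, {a₁,…,a_r})|`. -/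
theorem finrank_quotient_toric_eq_ncard_apery {n r : ℕ} (hrn : r ≤ n)
    (a : Fin n → Fin r → ℕ) (hsimp : isSimplicial hrn a) :
    Module.finrank 𝕜
        (MvPolynomial (Fin n) 𝕜 ⧸
          (toricIdealGen 𝕜 a ⊔
            Ideal.span (Set.range fun m : Fin r => (X (Fin.castLE hrn m) : MvPolynomial (Fin n) 𝕜))))
      = (aperySet (Sgen a) (extremalSet a)).ncard := by
  classical
  set I := toricIdealGen 𝕜 a ⊔
      Ideal.span (Set.range fun m : Fin r => (X (Fin.castLE hrn m) : MvPolynomial (Fin n) 𝕜))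
    with hI
  set Ap := aperySet (Sgen a) (extremalSet a) with hApDef
  set D : Set (Fin r →₀ ℕ) := {d | coeZ d ∈ Ap} with hD
  have hpick : ∀ d : D, ∃ u : Fin n →₀ ℕ, degZ a u = (d : Fin r →₀ ℕ) := by
    rintro ⟨d, hd⟩
    obtain ⟨u, hu⟩ := exists_degZ a hd.1
    exact ⟨u, coeZ_injective hu⟩
  choose pick hpick using hpick
  let mkL : MvPolynomial (Fin n) 𝕜 →ₗ[𝕜] (MvPolynomial (Fin n) 𝕜 ⧸ I) :=
    (Ideal.Quotient.mkₐ 𝕜 I).toLinearMap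
  have hmk : ∀ f, mkL f = Ideal.Quotient.mk I f := fun _ => rfl
  set b : D → (MvPolynomial (Fin n) 𝕜 ⧸ I) := fun d => mkL (monomial (pick d) 1) with hb
  have key : ∀ f ∈ I, ∀ d : D, coeff (d : Fin r →₀ ℕ) (phiS 𝕜 a f) = 0 :=
    fun f hf d => coeff_eq_zero_of_mem 𝕜 hrn a f hf _ d.2
  -- linear independence
  have hli : LinearIndependent 𝕜 b := by
    rw [linearIndependent_iff']
    intro s c hsum d₀ hd₀
    have hrw : ∀ d, c d • b d = mkL (monomial (pick d) (c d)) := fun d => by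
      rw [hb, ← map_smul, smul_monomial, smul_eq_mul, mul_one]
    rw [Finset.sum_congr rfl (fun d _ => hrw d), ← map_sum] at hsum
    have hgI : (∑ d ∈ s, monomial (pick d) (c d)) ∈ I := by
      rwa [hmk, Ideal.Quotient.eq_zero_iff_mem] at hsum
    have hz := key _ hgI d₀
    rw [map_sum, coeff_sum] at hz
    simp_rw [phiS_monomial, hpick, coeff_monomial, Subtype.coe_inj] at hz
    rwa [Finset.sum_ite_eq' s d₀ c, if_pos hd₀] at hz
  -- spanning
  have hmono : ∀ u : Fin n →₀ ℕ, mkL (monomial u 1) ∈ Submodule.span 𝕜 (Set.range b) := by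
    intro u
    by_cases hu : coeZ (degZ a u) ∈ Ap
    · have hd : degZ a u ∈ D := hu
      have heq : mkL (monomial u 1) = b ⟨_, hd⟩ := by
        show Ideal.Quotient.mk I (monomial u 1) = Ideal.Quotient.mk I (monomial (pick ⟨_, hd⟩) 1)
        rw [Ideal.Quotient.mk_eq_mk_iff_sub_mem]
        refine Ideal.mem_sup_left ?_
        rw [toricIdealGen_eq, RingHom.mem_ker, map_sub, phiS_monomial, phiS_monomial,
          hpick ⟨_, hd⟩, sub_self]
      rw [heq]
      exact Submodule.subset_span ⟨_, rfl⟩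
    · have hS := coeZ_degZ_mem a u
      have hex : ∃ e ∈ extremalSet a, coeZ (degZ a u) - e ∈ Sgen a := by
        by_contra hcon
        push_neg at hcon
        exact hu ⟨hS, hcon⟩
      obtain ⟨e, he, hse⟩ := hex
      obtain ⟨i, hir, rfl⟩ := he
      set A := Finsupp.equivFunOnFinite.symm (a i) with hA
      have hle : A ≤ degZ a u := by
        rw [Finsupp.le_def]
        intro j
        have h0 := Sgen_nonneg a hse j
        simp only [Pi.sub_apply, coeZ] at h0
        have hAj : A j = a i j := by simp [hA]
        omega
      obtain ⟨w, hw⟩ := exists_degZ a hse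
      have hw' : degZ a w = degZ a u - A := by
        apply coeZ_injective
        rw [hw]
        funext j
        have hj := Finsupp.le_def.mp hle j
        have hAj : A j = a i j := by simp [hA]
        simp only [coeZ, Finsupp.tsub_apply, Pi.sub_apply]
        omega
      set m' : Fin r := ⟨(i : ℕ), hir⟩ with hm'
      have hcast : Fin.castLE hrn m' = i := by ext; rfl
      have hJ : (X (Fin.castLE hrn m') * monomial w 1 : MvPolynomial (Fin n) 𝕜) ∈ I :=
        Ideal.mem_sup_right (Ideal.mul_mem_right _ _ (Ideal.subset_span ⟨m', rfl⟩))
      have hker : (monomial u 1 - X (Fin.castLE hrn m') * monomial w 1 :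
          MvPolynomial (Fin n) 𝕜) ∈ I := by
        refine Ideal.mem_sup_left ?_
        rw [toricIdealGen_eq, RingHom.mem_ker, map_sub, map_mul, phiS_monomial]
        have hx : phiS 𝕜 a (X (Fin.castLE hrn m')) = monomial A 1 := by
          rw [hcast]; exact aeval_X _ _
        rw [hx, phiS_monomial, monomial_mul, one_mul, hw', add_tsub_cancel_of_le hle, sub_self]
      have hmem : (monomial u 1 : MvPolynomial (Fin n) 𝕜) ∈ I := by
        have := I.add_mem hker hJ
        simpa using this
      rw [hmk, Ideal.Quotient.eq_zero_iff_mem.mpr hmem]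
      exact Submodule.zero_mem _
  have hspan : ⊤ ≤ Submodule.span 𝕜 (Set.range b) := by
    intro q _
    obtain ⟨f, rfl⟩ := Ideal.Quotient.mk_surjective q
    show mkL f ∈ Submodule.span 𝕜 (Set.range b)
    rw [f.as_sum, map_sum]
    refine Submodule.sum_mem _ fun u _ => ?_
    have h1 : mkL (monomial u (coeff u f)) = coeff u f • mkL (monomial u 1) := by
      rw [← map_smul, smul_monomial, smul_eq_mul, mul_one]
    rw [h1]
    exact Submodule.smul_mem _ _ (hmono u)
  let B : Module.Basis D 𝕜 (MvPolynomial (Fin n) 𝕜 ⧸ I) := Module.Basis.mk hli hspan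
  have hrank : Module.rank 𝕜 (MvPolynomial (Fin n) 𝕜 ⧸ I) = Cardinal.mk D :=
    B.mk_eq_rank''.symm
  have hfin : Module.finrank 𝕜 (MvPolynomial (Fin n) 𝕜 ⧸ I) = Nat.card D := by
    rw [Module.finrank, hrank]
    rfl
  rw [hfin, ← Nat.card_coe_set_eq]
  refine Nat.card_congr (Equiv.ofBijective (fun d : D => (⟨coeZ d, d.2⟩ : Ap)) ⟨?_, ?_⟩)
  · intro d e h
    exact Subtype.ext (coeZ_injective (congrArg Subtype.val h))
  · rintro ⟨x, hx⟩
    obtain ⟨u, hu⟩ := exists_degZ a hx.1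
    exact ⟨⟨degZ a u, by rw [hD, Set.mem_setOf_eq, hu]; exact hx⟩, Subtype.ext hu⟩
end

section
/- Let S = S_{a,d,k} with a,d ∈ ℕ² ℚ-linearly independent, k ≥ 2, minimal generation. Then the defining ideal I_S ⊆ k[x₁,…,x_{k+1}] (kernel of xᵢ ↦ t^{a+(i−1)d}) is generated by the set G = ∪_{ℓ=2}^{k} ξ_ℓ of quadratic binomials defined by: for 2ℓ > k+1, ξ_ℓ = {x_ℓ² − x_{2ℓ−k−1}x_{k+1}} ∪ {x_ℓ x_{ℓ+i} − x_{2ℓ−k−1+i}x_{k+1} : 1 ≤ i ≤ k−ℓ}; for 2ℓ ≤ k+1, ξ_ℓ = {x_ℓ² − x₁x_{2ℓ−1}} ∪ {x_ℓ x_{ℓ+i} − x₁x_{2ℓ−1+i} : 1 ≤ i ≤ k−2ℓ+2} ∪ {x_ℓ x_{ℓ+i} − x_{2ℓ−k−1+i}x_{k+1} : k−2ℓ+2 < i ≤ k−ℓ}. Moreover G is a minimal generating set. -/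
open MvPolynomial

variable (𝕜 : Type) [Field 𝕜]

/-- The variable `x_j` (for `1 ≤ j ≤ k+1`) of `𝕜[x₁, …, x_{k+1}]`, with the indexing of the
paper (`x_j` corresponds to the generator `a + (j−1)d`). -/
noncomputable def xv (k : ℕ) (j : ℕ) : MvPolynomial (Fin (k + 1)) 𝕜 :=
  X ⟨(j - 1) % (k + 1), Nat.mod_lt _ k.succ_pos⟩

/-- The set `G = ⋃_{ℓ=2}^{k} ξ_ℓ` of quadratic binomials.  For `2ℓ > k+1`,
`ξ_ℓ = {x_ℓ² − x_{2ℓ−k−1}x_{k+1}} ∪ {x_ℓ x_{ℓ+i} − x_{2ℓ−k−1+i}x_{k+1} : 1 ≤ i ≤ k−ℓ}`;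
for `2ℓ ≤ k+1`,
`ξ_ℓ = {x_ℓ² − x₁x_{2ℓ−1}} ∪ {x_ℓ x_{ℓ+i} − x₁x_{2ℓ−1+i} : 1 ≤ i ≤ k−2ℓ+2}
      ∪ {x_ℓ x_{ℓ+i} − x_{2ℓ−k−1+i}x_{k+1} : k−2ℓ+2 < i ≤ k−ℓ}`. -/
noncomputable def Gset (k : ℕ) : Set (MvPolynomial (Fin (k + 1)) 𝕜) :=
  {f | ∃ ℓ : ℕ, 2 ≤ ℓ ∧ ℓ ≤ k ∧
    ((k + 1 < 2 * ℓ ∧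
       (f = xv 𝕜 k ℓ * xv 𝕜 k ℓ - xv 𝕜 k (2 * ℓ - (k + 1)) * xv 𝕜 k (k + 1) ∨
        ∃ i : ℕ, 1 ≤ i ∧ i ≤ k - ℓ ∧
          f = xv 𝕜 k ℓ * xv 𝕜 k (ℓ + i) - xv 𝕜 k (2 * ℓ + i - (k + 1)) * xv 𝕜 k (k + 1))) ∨
     (2 * ℓ ≤ k + 1 ∧
       (f = xv 𝕜 k ℓ * xv 𝕜 k ℓ - xv 𝕜 k 1 * xv 𝕜 k (2 * ℓ - 1) ∨
        (∃ i : ℕ, 1 ≤ i ∧ i ≤ k + 2 - 2 * ℓ ∧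
          f = xv 𝕜 k ℓ * xv 𝕜 k (ℓ + i) - xv 𝕜 k 1 * xv 𝕜 k (2 * ℓ - 1 + i)) ∨
        (∃ i : ℕ, k + 2 - 2 * ℓ < i ∧ i ≤ k - ℓ ∧
          f = xv 𝕜 k ℓ * xv 𝕜 k (ℓ + i) - xv 𝕜 k (2 * ℓ + i - (k + 1)) * xv 𝕜 k (k + 1)))))}

/-- The monomial `t^s = t₁^{s₁} t₂^{s₂}` in `𝕜[t₁, t₂]`. -/
noncomputable def mono2 (s : ℕ × ℕ) : MvPolynomial (Fin 2) 𝕜 :=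
  monomial (Finsupp.single 0 s.1 + Finsupp.single 1 s.2) 1

/-- The defining (toric) ideal `I_{S_{a,d,k}} ⊆ 𝕜[x₁, …, x_{k+1}]`: the kernel of the
`𝕜`-algebra map `xᵢ ↦ t^{a+(i−1)d}`. -/
noncomputable def toricIdeal (a d : ℕ × ℕ) (k : ℕ) : Ideal (MvPolynomial (Fin (k + 1)) 𝕜) :=
  RingHom.ker ((aeval fun i : Fin (k + 1) => mono2 𝕜 (a + (i : ℕ) • d)) :
    MvPolynomial (Fin (k + 1)) 𝕜 →ₐ[𝕜] MvPolynomial (Fin 2) 𝕜)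

/-- `a` and `d` are linearly independent over `ℚ`. -/
def qLinIndep (a d : ℕ × ℕ) : Prop :=
  LinearIndependent ℚ ![((a.1 : ℚ), (a.2 : ℚ)), ((d.1 : ℚ), (d.2 : ℚ))]

/-- The generating set `a, a+d, …, a+kd` of `S_{a,d,k}` is minimal. -/
def minGen (a d : ℕ × ℕ) (k : ℕ) : Prop :=
  ∀ i : ℕ, i ≤ k →
    a + i • d ∉ AddSubmonoid.closure {x : ℕ × ℕ | ∃ j : ℕ, j ≤ k ∧ j ≠ i ∧ x = a + j • d}

namespace SadK

variable {k : ℕ}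

def degE (u : Fin (k+1) →₀ ℕ) : ℕ := ∑ i : Fin (k+1), u i
def wtE (u : Fin (k+1) →₀ ℕ) : ℕ := ∑ i : Fin (k+1), (i : ℕ) * u i
def midE (u : Fin (k+1) →₀ ℕ) : ℕ :=
  ∑ i : Fin (k+1), if (i : ℕ) = 0 ∨ (i : ℕ) = k then 0 else u i

noncomputable def nfE (hk : 0 < k) (n w : ℕ) : Fin (k+1) →₀ ℕ :=
  if w % k = 0 then
    Finsupp.single ⟨0, by omega⟩ (n - w / k) + Finsupp.single ⟨k, by omega⟩ (w / k)
  else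
    Finsupp.single ⟨0, by omega⟩ (n - w / k - 1)
      + Finsupp.single ⟨w % k, Nat.lt_succ_of_lt (Nat.mod_lt _ hk)⟩ 1
      + Finsupp.single ⟨k, by omega⟩ (w / k)

theorem degE_add (u v : Fin (k+1) →₀ ℕ) : degE (u + v) = degE u + degE v := by
  simp [degE, Finset.sum_add_distrib]

theorem wtE_add (u v : Fin (k+1) →₀ ℕ) : wtE (u + v) = wtE u + wtE v := by
  simp [wtE, Nat.mul_add, Finset.sum_add_distrib]

theorem midE_add (u v : Fin (k+1) →₀ ℕ) : midE (u + v) = midE u + midE v := by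
  simp only [midE, Finsupp.add_apply]
  rw [← Finset.sum_add_distrib]
  apply Finset.sum_congr rfl
  intro i _
  split <;> simp

theorem degE_single (j : Fin (k+1)) (c : ℕ) : degE (Finsupp.single j c) = c := by
  simp [degE, Finsupp.single_apply]

theorem wtE_single (j : Fin (k+1)) (c : ℕ) : wtE (Finsupp.single j c) = j * c := by
  simp only [wtE, Finsupp.single_apply]
  rw [Finset.sum_eq_single j]
  · rw [if_pos rfl]
  · intro b _ hb
    rw [if_neg (fun h => hb h.symm), Nat.mul_zero]
  · simp

theorem midE_single (j : Fin (k+1)) (c : ℕ) :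
    midE (Finsupp.single j c) = if (j : ℕ) = 0 ∨ (j : ℕ) = k then 0 else c := by
  simp only [midE]
  rw [Finset.sum_eq_single j]
  · split
    · rfl
    · rw [Finsupp.single_eq_same]
  · intro b _ hb
    rw [Finsupp.single_eq_of_ne' (fun h => hb h.symm)]
    split <;> rfl
  · simp

theorem wtE_le (u : Fin (k+1) →₀ ℕ) : wtE u ≤ k * degE u := by
  unfold wtE degE
  rw [Finset.mul_sum]
  apply Finset.sum_le_sum
  intro i _
  exact Nat.mul_le_mul_right _ (by omega : (i:ℕ) ≤ k)

theorem degE_nfE (hk : 0 < k) {n w : ℕ} (hw : w ≤ n * k) : degE (nfE hk n w) = n := by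
  have hqr := Nat.div_add_mod w k
  have hq : w / k ≤ n := by
    calc w / k ≤ n * k / k := Nat.div_le_div_right hw
    _ = n := Nat.mul_div_cancel n hk
  unfold nfE
  split
  · rw [degE_add, degE_single, degE_single]; omega
  · rw [degE_add, degE_add, degE_single, degE_single, degE_single]
    have : w / k < n := by
      rcases Nat.lt_or_ge (w/k) n with h | h
      · exact h
      · exfalso
        have : w / k = n := le_antisymm hq h
        rw [this, Nat.mul_comm] at hqr
        omega
    omega

theorem wtE_nfE (hk : 0 < k) {n w : ℕ} (hw : w ≤ n * k) : wtE (nfE hk n w) = w := by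
  have hqr := Nat.div_add_mod w k
  unfold nfE
  split
  · rw [wtE_add, wtE_single, wtE_single]
    simp only []
    omega
  · rw [wtE_add, wtE_add, wtE_single, wtE_single, wtE_single]
    simp only []
    omega

theorem midE_nfE (hk : 0 < k) (n w : ℕ) : midE (nfE hk n w) ≤ 1 := by
  unfold nfE
  split
  · rw [midE_add, midE_single, midE_single]
    simp
  next h0 =>
    rw [midE_add, midE_add, midE_single, midE_single, midE_single]
    have h1 : w % k < k := Nat.mod_lt _ hk
    simp [h0, Nat.ne_of_lt h1]


/-- The filter of middle indices. -/
def mids (k : ℕ) : Finset (Fin (k+1)) :=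
  Finset.univ.filter (fun i : Fin (k+1) => ¬((i : ℕ) = 0 ∨ (i : ℕ) = k))

theorem midE_eq_sum (u : Fin (k+1) →₀ ℕ) : midE u = ∑ i ∈ mids k, u i := by
  rw [mids, Finset.sum_filter, midE]
  apply Finset.sum_congr rfl
  intro i _
  by_cases h : (i : ℕ) = 0 ∨ (i : ℕ) = k
  · rw [if_pos h, if_neg (not_not.mpr h)]
  · rw [if_neg h, if_pos h]

theorem eq_nfE_pair (hk : 0 < k) (α β : ℕ) :
    Finsupp.single (⟨0, by omega⟩ : Fin (k+1)) α + Finsupp.single ⟨k, by omega⟩ β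
      = nfE hk (α + β) (k * β) := by
  have h1 : k * β % k = 0 := Nat.mul_mod_right k β
  have h2 : k * β / k = β := Nat.mul_div_cancel_left β hk
  rw [nfE, if_pos h1, h2]
  have h3 : α + β - β = α := by omega
  rw [h3]

theorem eq_nfE_triple (hk : 0 < k) (α β : ℕ) (m : Fin (k+1)) (hm1 : 1 ≤ (m : ℕ))
    (hm2 : (m : ℕ) ≤ k - 1) :
    Finsupp.single (⟨0, by omega⟩ : Fin (k+1)) α + Finsupp.single m 1
        + Finsupp.single ⟨k, by omega⟩ β
      = nfE hk (α + 1 + β) ((m : ℕ) + k * β) := by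
  have hmk : (m : ℕ) < k := by omega
  have h1 : ((m : ℕ) + k * β) % k = (m : ℕ) := by
    rw [Nat.add_mul_mod_self_left, Nat.mod_eq_of_lt hmk]
  have h2 : ((m : ℕ) + k * β) / k = β := by
    rw [Nat.add_mul_div_left _ _ hk, Nat.div_eq_of_lt hmk]
    omega
  rw [nfE, if_neg (by omega)]
  simp only [h1, h2, Fin.eta]
  have h3 : α + 1 + β - β - 1 = α := by omega
  rw [h3]

theorem eq_nfE_of_midE_le_one (hk : 0 < k) (u : Fin (k+1) →₀ ℕ) (h : midE u ≤ 1) :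
    u = nfE hk (degE u) (wtE u) := by
  have hks : (⟨k, by omega⟩ : Fin (k+1)) ≠ (⟨0, by omega⟩ : Fin (k+1)) := by
    simp [Fin.ext_iff]; omega
  interval_cases hm : midE u
  · -- mid = 0 : all middles vanish
    have hz : ∀ i ∈ mids k, u i = 0 := by
      rw [midE_eq_sum] at hm
      exact fun i hi => Finset.sum_eq_zero_iff.mp hm i hi
    have hu : u = Finsupp.single (⟨0, by omega⟩ : Fin (k+1)) (u ⟨0, by omega⟩)
        + Finsupp.single ⟨k, by omega⟩ (u ⟨k, by omega⟩) := by
      ext i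
      rw [Finsupp.add_apply]
      rcases eq_or_ne (i : ℕ) 0 with h0 | h0
      · have hi : (⟨0, by omega⟩ : Fin (k+1)) = i := Fin.ext h0.symm
        rw [hi, Finsupp.single_eq_same,
          Finsupp.single_eq_of_ne' (by simp [Fin.ext_iff]; omega)]
        omega
      rcases eq_or_ne (i : ℕ) k with hkk | hkk
      · have hi : (⟨k, by omega⟩ : Fin (k+1)) = i := Fin.ext hkk.symm
        rw [hi, Finsupp.single_eq_same,
          Finsupp.single_eq_of_ne' (by simp [Fin.ext_iff]; omega)]
        omega
      · rw [hz i (by simp only [mids, Finset.mem_filter, Finset.mem_univ, true_and]; omega),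
          Finsupp.single_eq_of_ne' (by simp [Fin.ext_iff]; omega),
          Finsupp.single_eq_of_ne' (by simp [Fin.ext_iff]; omega)]
        omega
    rw [hu, degE_add, degE_single, degE_single, wtE_add, wtE_single, wtE_single]
    simpa using eq_nfE_pair hk (u ⟨0, by omega⟩) (u ⟨k, by omega⟩)
  · -- mid = 1
    rw [midE_eq_sum] at hm
    obtain ⟨m, hmmem, hmne⟩ := Finset.exists_ne_zero_of_sum_ne_zero
      (by rw [hm]; exact one_ne_zero)
    have hum : u m = 1 := by
      have h5 := Finset.single_le_sum (f := fun i => u i) (fun i _ => Nat.zero_le _) hmmem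
      have h6 : u m ≤ 1 := by simpa [hm] using h5
      omega
    have hrest : ∀ i ∈ (mids k).erase m, u i = 0 := by
      have h5 := Finset.add_sum_erase _ (fun i => u i) hmmem
      have h6 : u m + ∑ x ∈ (mids k).erase m, u x = 1 := by simpa [hm] using h5
      have h7 : ∑ x ∈ (mids k).erase m, u x = 0 := by omega
      exact fun i hi => Finset.sum_eq_zero_iff.mp h7 i hi
    have hm0 : (m : ℕ) ≠ 0 ∧ (m : ℕ) ≠ k := by
      have h8 := hmmem
      simp only [mids, Finset.mem_filter, Finset.mem_univ, true_and] at h8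
      exact ⟨fun e => h8 (Or.inl e), fun e => h8 (Or.inr e)⟩
    have hu : u = Finsupp.single (⟨0, by omega⟩ : Fin (k+1)) (u ⟨0, by omega⟩)
        + Finsupp.single m 1 + Finsupp.single ⟨k, by omega⟩ (u ⟨k, by omega⟩) := by
      ext i
      rw [Finsupp.add_apply, Finsupp.add_apply]
      rcases eq_or_ne (i : ℕ) 0 with h0 | h0
      · have hi : (⟨0, by omega⟩ : Fin (k+1)) = i := Fin.ext h0.symm
        rw [hi, Finsupp.single_eq_same,
          Finsupp.single_eq_of_ne' (by simp [Fin.ext_iff]; omega : m ≠ i),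
          Finsupp.single_eq_of_ne' (by simp [Fin.ext_iff]; omega)]
        omega
      rcases eq_or_ne (i : ℕ) k with hkk | hkk
      · have hi : (⟨k, by omega⟩ : Fin (k+1)) = i := Fin.ext hkk.symm
        rw [hi, Finsupp.single_eq_same,
          Finsupp.single_eq_of_ne' (by simp [Fin.ext_iff]; omega : m ≠ i),
          Finsupp.single_eq_of_ne' (by simp [Fin.ext_iff]; omega)]
        omega
      rcases eq_or_ne m i with him | him
      · rw [him, Finsupp.single_eq_same,
          Finsupp.single_eq_of_ne' (by simp [Fin.ext_iff]; omega),
          Finsupp.single_eq_of_ne' (by simp [Fin.ext_iff]; omega), ← him, hum]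
        omega
      · rw [hrest i (by simp only [Finset.mem_erase, mids, Finset.mem_filter, Finset.mem_univ, true_and]; exact ⟨fun e => him e.symm, by omega⟩),
          Finsupp.single_eq_of_ne' him,
          Finsupp.single_eq_of_ne' (by simp [Fin.ext_iff]; omega),
          Finsupp.single_eq_of_ne' (by simp [Fin.ext_iff]; omega)]
        omega
    rw [hu]
    rw [degE_add, degE_add, degE_single, degE_single, degE_single,
      wtE_add, wtE_add, wtE_single, wtE_single, wtE_single]
    have h9 := eq_nfE_triple hk (u ⟨0, by omega⟩) (u ⟨k, by omega⟩) m
      (Nat.one_le_iff_ne_zero.mpr hm0.1) (by omega)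
    simpa using h9

theorem exists_pair_of_two_le_midE (u : Fin (k+1) →₀ ℕ) (h : 2 ≤ midE u) :
    ∃ i1 i2 : Fin (k+1), 1 ≤ (i1 : ℕ) ∧ (i1 : ℕ) ≤ (i2 : ℕ) ∧ (i2 : ℕ) ≤ k - 1 ∧
      Finsupp.single i1 1 + Finsupp.single i2 1 ≤ u := by
  classical
  rw [midE_eq_sum] at h
  by_cases hbig : ∃ i ∈ mids k, 2 ≤ u i
  · obtain ⟨i, hi, h2⟩ := hbig
    simp only [mids, Finset.mem_filter, Finset.mem_univ, true_and] at hi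
    refine ⟨i, i, by omega, le_refl _, by omega, ?_⟩
    rw [Finsupp.le_def]
    intro j
    rw [Finsupp.add_apply]
    rcases eq_or_ne i j with rfl | hne
    · rw [Finsupp.single_eq_same]; omega
    · rw [Finsupp.single_eq_of_ne' hne]; omega
  · push_neg at hbig
    set T := (mids k).filter (fun i => u i ≠ 0) with hT
    have hsum : ∑ i ∈ T, u i = ∑ i ∈ mids k, u i := Finset.sum_filter_ne_zero _
    have hcard : 2 ≤ T.card := by
      have h1 : ∑ i ∈ T, u i ≤ ∑ _i ∈ T, 1 := by
        apply Finset.sum_le_sum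
        intro i hi
        have := hbig i (Finset.mem_of_mem_filter i hi)
        omega
      simp at h1
      omega
    obtain ⟨a, ha, b, hb, hab⟩ := Finset.one_lt_card.mp hcard
    have hua : 1 ≤ u a := by
      have := (Finset.mem_filter.mp ha).2; omega
    have hub : 1 ≤ u b := by
      have := (Finset.mem_filter.mp hb).2; omega
    have hma : a ∈ mids k := Finset.mem_of_mem_filter a ha
    have hmb : b ∈ mids k := Finset.mem_of_mem_filter b hb
    simp only [mids, Finset.mem_filter, Finset.mem_univ, true_and] at hma hmb
    have hle : ∀ x y : Fin (k+1), x ≠ y → 1 ≤ u x → 1 ≤ u y →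
        Finsupp.single x 1 + Finsupp.single y 1 ≤ u := by
      intro x y hxy hx hy
      rw [Finsupp.le_def]
      intro j
      rw [Finsupp.add_apply]
      rcases eq_or_ne x j with rfl | hxj
      · rw [Finsupp.single_eq_same, Finsupp.single_eq_of_ne' (Ne.symm hxy)]; omega
      rcases eq_or_ne y j with rfl | hyj
      · rw [Finsupp.single_eq_same, Finsupp.single_eq_of_ne' hxj]; omega
      · rw [Finsupp.single_eq_of_ne' hxj, Finsupp.single_eq_of_ne' hyj]; omega
    rcases Nat.lt_or_ge (a : ℕ) (b : ℕ) with hl | hl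
    · exact ⟨a, b, by omega, by omega, by omega, hle a b hab hua hub⟩
    · have : (b : ℕ) < (a : ℕ) := by
        rcases Nat.lt_or_ge (b : ℕ) (a : ℕ) with h' | h'
        · exact h'
        · exact absurd (Fin.ext (by omega)) hab
      exact ⟨b, a, by omega, by omega, by omega, hle b a (Ne.symm hab) hub hua⟩


/-- The exponent of the "extreme" monomial paired with `x_{i1+1} x_{i2+1}` (0-indexed). -/
noncomputable def eexp (i1 i2 : Fin (k+1)) : Fin (k+1) →₀ ℕ :=
  if h : (i1 : ℕ) + (i2 : ℕ) ≤ k then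
    Finsupp.single ⟨0, by omega⟩ 1 + Finsupp.single ⟨(i1 : ℕ) + (i2 : ℕ), by omega⟩ 1
  else
    Finsupp.single ⟨(i1 : ℕ) + (i2 : ℕ) - k, by have := i1.isLt; have := i2.isLt; omega⟩ 1
      + Finsupp.single ⟨k, by omega⟩ 1

theorem degE_eexp (i1 i2 : Fin (k+1)) : degE (eexp i1 i2) = 2 := by
  rw [eexp]
  split <;> rw [degE_add, degE_single, degE_single]

theorem wtE_eexp (i1 i2 : Fin (k+1)) : wtE (eexp i1 i2) = (i1 : ℕ) + (i2 : ℕ) := by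
  rw [eexp]
  split <;> rw [wtE_add, wtE_single, wtE_single] <;> simp <;> omega

theorem midE_eexp (i1 i2 : Fin (k+1)) : midE (eexp i1 i2) ≤ 1 := by
  rw [eexp]
  split
  · have h0 : ((⟨0, by omega⟩ : Fin (k+1)) : ℕ) = 0 := rfl
    rw [midE_add, midE_single, midE_single, if_pos (Or.inl h0)]
    split <;> omega
  · have hkk : ((⟨k, by omega⟩ : Fin (k+1)) : ℕ) = k := rfl
    rw [midE_add, midE_single, midE_single, if_pos (Or.inr hkk)]
    split <;> omega

theorem degE_pair (i1 i2 : Fin (k+1)) :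
    degE (Finsupp.single i1 1 + Finsupp.single i2 1) = 2 := by
  rw [degE_add, degE_single, degE_single]

theorem wtE_pair (i1 i2 : Fin (k+1)) :
    wtE (Finsupp.single i1 1 + Finsupp.single i2 1) = (i1 : ℕ) + (i2 : ℕ) := by
  rw [wtE_add, wtE_single, wtE_single]; omega

theorem xv_eq {j : ℕ} (h1 : 1 ≤ j) (h2 : j ≤ k + 1) :
    xv 𝕜 k j = X (⟨j - 1, by omega⟩ : Fin (k+1)) := by
  rw [xv]
  congr 1
  exact Fin.ext (Nat.mod_eq_of_lt (by omega))

theorem xv_mul_xv {p q : ℕ} (hp1 : 1 ≤ p) (hp2 : p ≤ k + 1) (hq1 : 1 ≤ q) (hq2 : q ≤ k + 1) :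
    xv 𝕜 k p * xv 𝕜 k q
      = monomial (Finsupp.single (⟨p - 1, by omega⟩ : Fin (k+1)) 1
          + Finsupp.single (⟨q - 1, by omega⟩ : Fin (k+1)) 1) (1 : 𝕜) := by
  rw [xv_eq 𝕜 hp1 hp2, xv_eq 𝕜 hq1 hq2, X, X, monomial_mul, one_mul]

theorem quad_congr {i1 i2 j1 j2 i1' i2' j1' j2' : Fin (k+1)}
    (ha : (i1 : ℕ) = (i1' : ℕ)) (hb : (i2 : ℕ) = (i2' : ℕ)) (hc : (j1 : ℕ) = (j1' : ℕ))
    (hd : (j2 : ℕ) = (j2' : ℕ)) :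
    monomial (Finsupp.single i1 1 + Finsupp.single i2 1) (1 : 𝕜)
      - monomial (Finsupp.single j1 1 + Finsupp.single j2 1) 1
    = monomial (Finsupp.single i1' 1 + Finsupp.single i2' 1) 1
      - monomial (Finsupp.single j1' 1 + Finsupp.single j2' 1) 1 := by
  rw [Fin.ext ha, Fin.ext hb, Fin.ext hc, Fin.ext hd]

theorem mem_Gset (hk2 : 2 ≤ k) (i1 i2 : Fin (k+1)) (h1 : 1 ≤ (i1 : ℕ))
    (h12 : (i1 : ℕ) ≤ (i2 : ℕ)) (h2 : (i2 : ℕ) ≤ k - 1) :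
    monomial (Finsupp.single i1 1 + Finsupp.single i2 1) (1 : 𝕜) - monomial (eexp i1 i2) 1
      ∈ Gset 𝕜 k := by
  have hi1k := i1.isLt
  have hi2k := i2.isLt
  refine ⟨(i1 : ℕ) + 1, by omega, by omega, ?_⟩
  by_cases hbig : k + 1 < 2 * ((i1 : ℕ) + 1)
  · left
    refine ⟨hbig, ?_⟩
    rcases eq_or_ne (i1 : ℕ) (i2 : ℕ) with hi | hi
    · left
      rw [xv_mul_xv 𝕜 (by omega) (by omega) (by omega) (by omega),
        xv_mul_xv 𝕜 (by omega) (by omega) (by omega) (by omega), eexp]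
      split
      · refine quad_congr 𝕜 ?_ ?_ ?_ ?_
        all_goals simp only [Fin.val_mk]
        all_goals omega
      · refine quad_congr 𝕜 ?_ ?_ ?_ ?_
        all_goals simp only [Fin.val_mk]
        all_goals omega
    · right
      refine ⟨(i2 : ℕ) - (i1 : ℕ), by omega, by omega, ?_⟩
      rw [xv_mul_xv 𝕜 (by omega) (by omega) (by omega) (by omega),
        xv_mul_xv 𝕜 (by omega) (by omega) (by omega) (by omega), eexp]
      split
      · refine quad_congr 𝕜 ?_ ?_ ?_ ?_
        all_goals simp only [Fin.val_mk]
        all_goals omega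
      · refine quad_congr 𝕜 ?_ ?_ ?_ ?_
        all_goals simp only [Fin.val_mk]
        all_goals omega
  · right
    refine ⟨by omega, ?_⟩
    rcases eq_or_ne (i1 : ℕ) (i2 : ℕ) with hi | hi
    · left
      rw [xv_mul_xv 𝕜 (by omega) (by omega) (by omega) (by omega),
        xv_mul_xv 𝕜 (by omega) (by omega) (by omega) (by omega), eexp]
      split
      · refine quad_congr 𝕜 ?_ ?_ ?_ ?_
        all_goals simp only [Fin.val_mk]
        all_goals omega
      · refine quad_congr 𝕜 ?_ ?_ ?_ ?_
        all_goals simp only [Fin.val_mk]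
        all_goals omega
    · by_cases hsm : (i1 : ℕ) + (i2 : ℕ) ≤ k
      · right; left
        refine ⟨(i2 : ℕ) - (i1 : ℕ), by omega, by omega, ?_⟩
        rw [xv_mul_xv 𝕜 (by omega) (by omega) (by omega) (by omega),
          xv_mul_xv 𝕜 (by omega) (by omega) (by omega) (by omega), eexp, dif_pos hsm]
        refine quad_congr 𝕜 ?_ ?_ ?_ ?_
        all_goals simp only [Fin.val_mk]
        all_goals omega
      · right; right
        refine ⟨(i2 : ℕ) - (i1 : ℕ), by omega, by omega, ?_⟩
        rw [xv_mul_xv 𝕜 (by omega) (by omega) (by omega) (by omega),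
          xv_mul_xv 𝕜 (by omega) (by omega) (by omega) (by omega), eexp, dif_neg hsm]
        refine quad_congr 𝕜 ?_ ?_ ?_ ?_
        all_goals simp only [Fin.val_mk]
        all_goals omega

theorem Gset_elim (hk2 : 2 ≤ k) {f : MvPolynomial (Fin (k+1)) 𝕜} (hf : f ∈ Gset 𝕜 k) :
    ∃ i1 i2 : Fin (k+1), 1 ≤ (i1 : ℕ) ∧ (i1 : ℕ) ≤ (i2 : ℕ) ∧ (i2 : ℕ) ≤ k - 1 ∧
      f = monomial (Finsupp.single i1 1 + Finsupp.single i2 1) (1 : 𝕜)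
          - monomial (eexp i1 i2) 1 := by
  obtain ⟨ℓ, hl2, hlk, hc⟩ := hf
  rcases hc with ⟨hbig, hc | ⟨i, hi1, hi2, hc⟩⟩ |
    ⟨hsmall, hc | ⟨i, hi1, hi2, hc⟩ | ⟨i, hi1, hi2, hc⟩⟩
  · refine ⟨⟨ℓ - 1, by omega⟩, ⟨ℓ - 1, by omega⟩, by (first | omega | (simp only [Fin.val_mk]; omega) | (simp; omega) | simp), by (first | omega | (simp only [Fin.val_mk]; omega) | (simp; omega) | simp), by (first | omega | (simp only [Fin.val_mk]; omega) | (simp; omega) | simp), ?_⟩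
    rw [hc, xv_mul_xv 𝕜 (by omega) (by omega) (by omega) (by omega),
      xv_mul_xv 𝕜 (by omega) (by omega) (by omega) (by omega), eexp]
    by_cases hb : ℓ - 1 + (ℓ - 1) ≤ k
    · rw [dif_pos (by (first | omega | (simp only [Fin.val_mk]; omega) | (simp; omega) | simp))]
      refine quad_congr 𝕜 ?_ ?_ ?_ ?_
      all_goals simp only [Fin.val_mk]
      all_goals omega
    · rw [dif_neg (by (first | omega | (simp only [Fin.val_mk]; omega) | (simp; omega) | simp))]
      refine quad_congr 𝕜 ?_ ?_ ?_ ?_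
      all_goals simp only [Fin.val_mk]
      all_goals omega
  · refine ⟨⟨ℓ - 1, by omega⟩, ⟨ℓ + i - 1, by omega⟩, by (first | omega | (simp only [Fin.val_mk]; omega) | (simp; omega) | simp), by (first | omega | (simp only [Fin.val_mk]; omega) | (simp; omega) | simp), by (first | omega | (simp only [Fin.val_mk]; omega) | (simp; omega) | simp), ?_⟩
    rw [hc, xv_mul_xv 𝕜 (by omega) (by omega) (by omega) (by omega),
      xv_mul_xv 𝕜 (by omega) (by omega) (by omega) (by omega), eexp]
    by_cases hb : ℓ - 1 + (ℓ + i - 1) ≤ k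
    · rw [dif_pos (by (first | omega | (simp only [Fin.val_mk]; omega) | (simp; omega) | simp))]
      refine quad_congr 𝕜 ?_ ?_ ?_ ?_
      all_goals simp only [Fin.val_mk]
      all_goals omega
    · rw [dif_neg (by (first | omega | (simp only [Fin.val_mk]; omega) | (simp; omega) | simp))]
      refine quad_congr 𝕜 ?_ ?_ ?_ ?_
      all_goals simp only [Fin.val_mk]
      all_goals omega
  · refine ⟨⟨ℓ - 1, by omega⟩, ⟨ℓ - 1, by omega⟩, by (first | omega | (simp only [Fin.val_mk]; omega) | (simp; omega) | simp), by (first | omega | (simp only [Fin.val_mk]; omega) | (simp; omega) | simp), by (first | omega | (simp only [Fin.val_mk]; omega) | (simp; omega) | simp), ?_⟩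
    rw [hc, xv_mul_xv 𝕜 (by omega) (by omega) (by omega) (by omega),
      xv_mul_xv 𝕜 (by omega) (by omega) (by omega) (by omega), eexp,
      dif_pos (by (first | omega | (simp only [Fin.val_mk]; omega) | (simp; omega) | simp))]
    refine quad_congr 𝕜 ?_ ?_ ?_ ?_
    all_goals simp only [Fin.val_mk]
    all_goals omega
  · refine ⟨⟨ℓ - 1, by omega⟩, ⟨ℓ + i - 1, by omega⟩, by (first | omega | (simp only [Fin.val_mk]; omega) | (simp; omega) | simp), by (first | omega | (simp only [Fin.val_mk]; omega) | (simp; omega) | simp), by (first | omega | (simp only [Fin.val_mk]; omega) | (simp; omega) | simp), ?_⟩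
    rw [hc, xv_mul_xv 𝕜 (by omega) (by omega) (by omega) (by omega),
      xv_mul_xv 𝕜 (by omega) (by omega) (by omega) (by omega), eexp,
      dif_pos (by (first | omega | (simp only [Fin.val_mk]; omega) | (simp; omega) | simp))]
    refine quad_congr 𝕜 ?_ ?_ ?_ ?_
    all_goals simp only [Fin.val_mk]
    all_goals omega
  · refine ⟨⟨ℓ - 1, by omega⟩, ⟨ℓ + i - 1, by omega⟩, by (first | omega | (simp only [Fin.val_mk]; omega) | (simp; omega) | simp), by (first | omega | (simp only [Fin.val_mk]; omega) | (simp; omega) | simp), by (first | omega | (simp only [Fin.val_mk]; omega) | (simp; omega) | simp), ?_⟩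
    rw [hc, xv_mul_xv 𝕜 (by omega) (by omega) (by omega) (by omega),
      xv_mul_xv 𝕜 (by omega) (by omega) (by omega) (by omega), eexp,
      dif_neg (by (first | omega | (simp only [Fin.val_mk]; omega) | (simp; omega) | simp))]
    refine quad_congr 𝕜 ?_ ?_ ?_ ?_
    all_goals simp only [Fin.val_mk]
    all_goals omega


/-- The algebra map of the toric ideal. -/
noncomputable def phi (a d : ℕ × ℕ) :
    MvPolynomial (Fin (k + 1)) 𝕜 →ₐ[𝕜] MvPolynomial (Fin 2) 𝕜 :=
  aeval fun i : Fin (k + 1) => mono2 𝕜 (a + (i : ℕ) • d)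

theorem toricIdeal_eq_ker (a d : ℕ × ℕ) :
    toricIdeal 𝕜 a d k = RingHom.ker (phi 𝕜 a d) := rfl

theorem mono2_mul (s t : ℕ × ℕ) : mono2 𝕜 s * mono2 𝕜 t = mono2 𝕜 (s + t) := by
  rw [mono2, mono2, mono2, monomial_mul, one_mul]
  have h : (Finsupp.single (0 : Fin 2) s.1 + Finsupp.single 1 s.2)
      + (Finsupp.single (0 : Fin 2) t.1 + Finsupp.single 1 t.2)
      = Finsupp.single (0 : Fin 2) (s + t).1 + Finsupp.single 1 (s + t).2 := by
    rw [Prod.fst_add, Prod.snd_add, Finsupp.single_add, Finsupp.single_add]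
    exact add_add_add_comm _ _ _ _
  rw [h]

theorem mono2_pow (s : ℕ × ℕ) (e : ℕ) : mono2 𝕜 s ^ e = mono2 𝕜 (e • s) := by
  rw [mono2, mono2, monomial_pow, one_pow]
  congr 1
  simp [Prod.smul_fst, Prod.smul_snd, smul_add, Finsupp.smul_single, smul_eq_mul]

theorem mono2_zero : mono2 𝕜 0 = 1 := by
  rw [mono2]
  simp

theorem mono2_prod {ι : Type*} (s : Finset ι) (g : ι → ℕ × ℕ) :
    ∏ i ∈ s, mono2 𝕜 (g i) = mono2 𝕜 (∑ i ∈ s, g i) := by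
  classical
  induction s using Finset.induction_on with
  | empty => simp [mono2_zero]
  | insert _ _ hnot ih =>
      rw [Finset.prod_insert hnot, Finset.sum_insert hnot, ih, mono2_mul]

theorem phi_monomial (a d : ℕ × ℕ) (u : Fin (k+1) →₀ ℕ) (c : 𝕜) :
    phi 𝕜 a d (monomial u c) = c • mono2 𝕜 (degE u • a + wtE u • d) := by
  rw [phi, aeval_monomial]
  have h1 : (u.prod fun i e => mono2 𝕜 (a + (i : ℕ) • d) ^ e)
      = mono2 𝕜 (∑ i : Fin (k+1), u i • (a + (i : ℕ) • d)) := by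
    rw [Finsupp.prod_fintype _ _ (fun i => by rw [pow_zero])]
    rw [← mono2_prod]
    apply Finset.prod_congr rfl
    intro i _
    rw [mono2_pow]
  rw [h1]
  have h2 : (∑ i : Fin (k+1), u i • (a + (i : ℕ) • d)) = degE u • a + wtE u • d := by
    have h3 : ∀ i : Fin (k+1), u i • (a + (i : ℕ) • d) = u i • a + ((i : ℕ) * u i) • d := by
      intro i
      rw [smul_add, smul_smul, Nat.mul_comm]
    simp only [h3]
    rw [Finset.sum_add_distrib, degE, wtE, ← Finset.sum_smul, ← Finset.sum_smul]
  rw [h2, algebraMap_eq, smul_eq_C_mul]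

theorem mono2_inj {s t : ℕ × ℕ} (h : mono2 𝕜 s = mono2 𝕜 t) : s = t := by
  rw [mono2, mono2] at h
  have h1 := congrArg (coeff (Finsupp.single (0 : Fin 2) s.1 + Finsupp.single 1 s.2)) h
  rw [coeff_monomial, coeff_monomial, if_pos rfl] at h1
  have h2 : (Finsupp.single (0 : Fin 2) t.1 + Finsupp.single 1 t.2)
      = Finsupp.single (0 : Fin 2) s.1 + Finsupp.single 1 s.2 := by
    by_contra hne
    rw [if_neg hne] at h1
    exact one_ne_zero h1
  have e0 := DFunLike.congr_fun h2 0
  have e1 := DFunLike.congr_fun h2 1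
  simp [Finsupp.single_apply] at e0 e1
  exact Prod.ext e0.symm e1.symm

theorem pair_inj {a d : ℕ × ℕ} (hli : qLinIndep a d) {n w n' w' : ℕ}
    (h : n • a + w • d = n' • a + w' • d) : n = n' ∧ w = w' := by
  have e1 : n * a.1 + w * d.1 = n' * a.1 + w' * d.1 := congrArg Prod.fst h
  have e2 : n * a.2 + w * d.2 = n' * a.2 + w' * d.2 := congrArg Prod.snd h
  have key := (Fintype.linearIndependent_iff.mp hli)
    ![(n : ℚ) - (n' : ℚ), (w : ℚ) - (w' : ℚ)]
  have e1' : (n : ℚ) * a.1 + w * d.1 = n' * a.1 + w' * d.1 := by exact_mod_cast e1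
  have e2' : (n : ℚ) * a.2 + w * d.2 = n' * a.2 + w' * d.2 := by exact_mod_cast e2
  have hz : ∑ i : Fin 2, (![(n : ℚ) - (n' : ℚ), (w : ℚ) - (w' : ℚ)]) i •
      (![((a.1 : ℚ), (a.2 : ℚ)), ((d.1 : ℚ), (d.2 : ℚ))]) i = 0 := by
    rw [Fin.sum_univ_two]
    simp only [Matrix.cons_val_zero, Matrix.cons_val_one, Matrix.head_cons]
    rw [Prod.smul_mk, Prod.smul_mk, Prod.mk_add_mk, Prod.mk_eq_zero]
    rw [smul_eq_mul, smul_eq_mul, smul_eq_mul, smul_eq_mul]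
    constructor
    · linear_combination e1'
    · linear_combination e2'
  have h0 := key hz 0
  have h1 := key hz 1
  simp only [Matrix.cons_val_zero, Matrix.cons_val_one, Matrix.head_cons, sub_eq_zero] at h0 h1
  constructor
  · exact_mod_cast h0
  · exact_mod_cast h1


theorem midE_pair {i1 i2 : Fin (k+1)} (h1 : 1 ≤ (i1 : ℕ)) (h1' : (i1 : ℕ) ≤ k - 1)
    (h2 : 1 ≤ (i2 : ℕ)) (h2' : (i2 : ℕ) ≤ k - 1) (hk2 : 2 ≤ k) :
    midE (Finsupp.single i1 1 + Finsupp.single i2 1) = 2 := by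
  rw [midE_add, midE_single, midE_single, if_neg (by omega), if_neg (by omega)]

theorem reduce (hk2 : 2 ≤ k) (hk0 : 0 < k) :
    ∀ (N : ℕ) (u : Fin (k+1) →₀ ℕ), midE u ≤ N →
      monomial u (1 : 𝕜) - monomial (nfE hk0 (degE u) (wtE u)) 1 ∈ Ideal.span (Gset 𝕜 k) := by
  intro N
  induction N with
  | zero =>
      intro u hu
      rw [← eq_nfE_of_midE_le_one hk0 u (by omega), sub_self]
      exact zero_mem _
  | succ N ih =>
      intro u hu
      by_cases h1 : midE u ≤ 1
      · rw [← eq_nfE_of_midE_le_one hk0 u h1, sub_self]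
        exact zero_mem _
      · obtain ⟨i1, i2, hi1, h12, hi2, hle⟩ := exists_pair_of_two_le_midE u (by omega)
        set m0 : Fin (k+1) →₀ ℕ := Finsupp.single i1 1 + Finsupp.single i2 1 with hm0
        set u' : Fin (k+1) →₀ ℕ := u - m0 with hu'
        have hsplit : u = m0 + u' := by
          ext j
          have hj := Finsupp.le_def.mp hle j
          rw [Finsupp.add_apply, Finsupp.tsub_apply]
          rw [hm0] at hj ⊢
          omega
        have hg : monomial m0 (1 : 𝕜) - monomial (eexp i1 i2) 1 ∈ Gset 𝕜 k :=
          mem_Gset 𝕜 hk2 i1 i2 hi1 h12 hi2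
        have key : monomial u (1 : 𝕜) - monomial (u' + eexp i1 i2) 1
            = monomial u' 1 * (monomial m0 1 - monomial (eexp i1 i2) 1) := by
          rw [mul_sub, monomial_mul, monomial_mul, one_mul, hsplit, add_comm m0 u']
        have mem1 : monomial u (1 : 𝕜) - monomial (u' + eexp i1 i2) 1
            ∈ Ideal.span (Gset 𝕜 k) := by
          rw [key]
          exact Ideal.mul_mem_left _ _ (Ideal.subset_span hg)
        have hdeg : degE (u' + eexp i1 i2) = degE u := by
          rw [degE_add, degE_eexp, hsplit, degE_add, degE_pair, Nat.add_comm]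
        have hwt : wtE (u' + eexp i1 i2) = wtE u := by
          rw [wtE_add, wtE_eexp, hsplit, wtE_add, wtE_pair, Nat.add_comm]
        have hmid : midE (u' + eexp i1 i2) ≤ N := by
          have e1 : midE u = 2 + midE u' := by
            rw [hsplit, midE_add, midE_pair hi1 (by omega) (by omega) hi2 hk2]
          have e2 := midE_eexp i1 i2
          rw [midE_add]
          omega
        have ihstep := ih (u' + eexp i1 i2) hmid
        rw [hdeg, hwt] at ihstep
        have : monomial u (1 : 𝕜) - monomial (nfE hk0 (degE u) (wtE u)) 1
            = (monomial u 1 - monomial (u' + eexp i1 i2) 1)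
              + (monomial (u' + eexp i1 i2) 1 - monomial (nfE hk0 (degE u) (wtE u)) 1) := by
          ring
        rw [this]
        exact Ideal.add_mem _ mem1 ihstep

theorem exists_nf (hk2 : 2 ≤ k) (hk0 : 0 < k) (a d : ℕ × ℕ)
    (f : MvPolynomial (Fin (k+1)) 𝕜) :
    ∃ h : MvPolynomial (Fin (k+1)) 𝕜, f - h ∈ Ideal.span (Gset 𝕜 k) ∧
      (∀ u ∈ h.support, u = nfE hk0 (degE u) (wtE u)) ∧ phi 𝕜 a d h = phi 𝕜 a d f := by
  classical
  induction f using MvPolynomial.induction_on' with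
  | monomial u c =>
      refine ⟨monomial (nfE hk0 (degE u) (wtE u)) c, ?_, ?_, ?_⟩
      · have : monomial u c - monomial (nfE hk0 (degE u) (wtE u)) c
            = C c * (monomial u 1 - monomial (nfE hk0 (degE u) (wtE u)) 1) := by
          rw [mul_sub, C_mul_monomial, C_mul_monomial, mul_one]
        rw [this]
        exact Ideal.mul_mem_left _ _ (reduce 𝕜 hk2 hk0 (midE u) u le_rfl)
      · intro v hv
        have hv' : v = nfE hk0 (degE u) (wtE u) := by
          by_cases hc : c = 0
          · rw [hc, monomial_zero] at hv
            simp at hv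
          · rw [support_monomial] at hv
            rw [if_neg hc] at hv
            exact Finset.mem_singleton.mp hv
        have hwle : wtE u ≤ degE u * k := by
          rw [Nat.mul_comm]; exact wtE_le u
        rw [hv', degE_nfE hk0 hwle, wtE_nfE hk0 hwle]
      · rw [phi_monomial, phi_monomial]
        have hwle : wtE u ≤ degE u * k := by
          rw [Nat.mul_comm]; exact wtE_le u
        rw [degE_nfE hk0 hwle, wtE_nfE hk0 hwle]
  | add p q hp hq =>
      obtain ⟨h1, hs1, hn1, hp1⟩ := hp
      obtain ⟨h2, hs2, hn2, hp2⟩ := hq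
      refine ⟨h1 + h2, ?_, ?_, ?_⟩
      · have : p + q - (h1 + h2) = (p - h1) + (q - h2) := by ring
        rw [this]
        exact Ideal.add_mem _ hs1 hs2
      · intro v hv
        rcases Finset.mem_union.mp (MvPolynomial.support_add hv) with h | h
        · exact hn1 v h
        · exact hn2 v h
      · rw [map_add, map_add, hp1, hp2]

theorem eq_zero_of_nf {a d : ℕ × ℕ} (hli : qLinIndep a d) (hk0 : 0 < k)
    (h : MvPolynomial (Fin (k+1)) 𝕜)
    (hsupp : ∀ u ∈ h.support, u = nfE hk0 (degE u) (wtE u))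
    (hphi : phi 𝕜 a d h = 0) : h = 0 := by
  ext u0
  rw [coeff_zero]
  by_cases hu0 : u0 ∈ h.support
  swap
  · exact notMem_support_iff.mp hu0
  · have hrep : phi 𝕜 a d h
        = ∑ v ∈ h.support, (monomial (Finsupp.single (0 : Fin 2)
            (degE v • a + wtE v • d).1 + Finsupp.single 1 (degE v • a + wtE v • d).2))
            (coeff v h) := by
      conv_lhs => rw [h.as_sum]
      rw [map_sum]
      apply Finset.sum_congr rfl
      intro v _
      rw [phi_monomial, mono2, smul_monomial, smul_eq_mul, mul_one]
    have hco := congrArg (coeff (Finsupp.single (0 : Fin 2)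
      (degE u0 • a + wtE u0 • d).1 + Finsupp.single 1 (degE u0 • a + wtE u0 • d).2)) hphi
    rw [hrep] at hco
    rw [coeff_zero] at hco
    rw [coeff_sum] at hco
    rw [Finset.sum_eq_single u0] at hco
    · rw [coeff_monomial, if_pos rfl] at hco
      exact hco
    · intro v hv hvne
      rw [coeff_monomial, if_neg ?_]
      intro hFeq
      apply hvne
      have hA : degE v • a + wtE v • d = degE u0 • a + wtE u0 • d := by
        have := mono2_inj 𝕜 (s := degE v • a + wtE v • d) (t := degE u0 • a + wtE u0 • d) ?_
        · exact this
        · rw [mono2, mono2]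
          rw [hFeq]
      obtain ⟨hdeq, hweq⟩ := pair_inj hli hA
      rw [hsupp v hv, hsupp u0 hu0, hdeq, hweq]
    · intro hnot
      exact absurd hu0 hnot

theorem phi_Gset_zero (hk2 : 2 ≤ k) (a d : ℕ × ℕ) {g : MvPolynomial (Fin (k+1)) 𝕜}
    (hg : g ∈ Gset 𝕜 k) : phi 𝕜 a d g = 0 := by
  obtain ⟨i1, i2, h1, h12, h2, hform⟩ := Gset_elim 𝕜 hk2 hg
  rw [hform, map_sub, phi_monomial, phi_monomial, degE_pair, degE_eexp, wtE_pair, wtE_eexp,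
    sub_self]


theorem degE_le_of_le {u v : Fin (k+1) →₀ ℕ} (h : u ≤ v) : degE u ≤ degE v :=
  Finset.sum_le_sum fun i _ => Finsupp.le_def.mp h i

theorem eq_of_le_of_degE_eq {u v : Fin (k+1) →₀ ℕ} (h : u ≤ v) (hd : degE u = degE v) :
    u = v := by
  ext i
  by_contra hne
  have hlt : u i < v i := lt_of_le_of_ne (Finsupp.le_def.mp h i) hne
  have : degE u < degE v :=
    Finset.sum_lt_sum (fun j _ => Finsupp.le_def.mp h j) ⟨i, Finset.mem_univ i, hlt⟩
  omega

theorem pair_eq {x y x' y' : Fin (k+1)}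
    (h : Finsupp.single x 1 + Finsupp.single y 1 = Finsupp.single x' 1 + Finsupp.single y' 1) :
    (x = x' ∧ y = y') ∨ (x = y' ∧ y = x') := by
  classical
  have hx := DFunLike.congr_fun h x
  rw [Finsupp.add_apply, Finsupp.add_apply, Finsupp.single_eq_same,
    Finsupp.single_apply, Finsupp.single_apply, Finsupp.single_apply] at hx
  by_cases hxx : x' = x
  · left
    refine ⟨hxx.symm, ?_⟩
    rw [hxx] at h
    have := add_left_cancel h
    rcases (Finsupp.single_eq_single_iff _ _ _ _).mp this with ⟨h1, _⟩ | ⟨h1, _⟩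
    · exact h1
    · omega
  · right
    have hxy' : y' = x := by
      rw [if_neg hxx] at hx
      by_cases hyy : y' = x
      · exact hyy
      · rw [if_neg hyy] at hx
        split at hx <;> omega
    refine ⟨hxy'.symm, ?_⟩
    rw [hxy', add_comm (Finsupp.single x' 1) (Finsupp.single x 1)] at h
    have h2 := add_left_cancel h
    rcases (Finsupp.single_eq_single_iff _ _ _ _).mp h2 with ⟨h1, _⟩ | ⟨h1, _⟩
    · exact h1
    · omega


theorem not_eexp_le_pair (hk2 : 2 ≤ k) {i1 i2 : Fin (k+1)} (h1 : 1 ≤ (i1 : ℕ))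
    (h12 : (i1 : ℕ) ≤ (i2 : ℕ)) (h2 : (i2 : ℕ) ≤ k - 1) (j1 j2 : Fin (k+1)) :
    ¬ eexp j1 j2 ≤ Finsupp.single i1 1 + Finsupp.single i2 1 := by
  intro hle
  have hm0 : ∀ m : Fin (k+1), (m : ℕ) = 0 ∨ (m : ℕ) = k →
      ((Finsupp.single i1 1 + Finsupp.single i2 1 : Fin (k+1) →₀ ℕ)) m = 0 := by
    intro m hm
    have hne1 : i1 ≠ m := fun he => by rw [← he] at hm; omega
    have hne2 : i2 ≠ m := fun he => by rw [← he] at hm; omega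
    rw [Finsupp.add_apply, Finsupp.single_eq_of_ne' hne1, Finsupp.single_eq_of_ne' hne2,
      Nat.add_zero]
  rw [eexp] at hle
  split at hle
  · have := Finsupp.le_def.mp hle ⟨0, by omega⟩
    rw [Finsupp.add_apply, Finsupp.single_eq_same, hm0 ⟨0, by omega⟩ (Or.inl rfl)] at this
    omega
  · have := Finsupp.le_def.mp hle ⟨k, by omega⟩
    rw [Finsupp.add_apply, Finsupp.single_eq_same, hm0 ⟨k, by omega⟩ (Or.inr rfl)] at this
    omega

theorem Gset_minimal (hk2 : 2 ≤ k) {f : MvPolynomial (Fin (k+1)) 𝕜} (hf : f ∈ Gset 𝕜 k) :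
    f ∉ Ideal.span (Gset 𝕜 k \ {f}) := by
  classical
  obtain ⟨i1, i2, h1, h12, h2, hform⟩ := Gset_elim 𝕜 hk2 hf
  intro hmem
  have hP : ∀ (g : MvPolynomial (Fin (k+1)) 𝕜), g ∈ Ideal.span (Gset 𝕜 k \ {f}) →
      ∀ v ≤ Finsupp.single i1 1 + Finsupp.single i2 1, coeff v g = 0 := by
    intro g hg
    refine Submodule.span_induction ?_ ?_ ?_ ?_ hg
    · intro g' hg' v hv
      obtain ⟨hG, hne⟩ := hg'
      obtain ⟨j1, j2, g1, g12, g2, gform⟩ := Gset_elim 𝕜 hk2 hG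
      rw [gform, coeff_sub, coeff_monomial, coeff_monomial, if_neg ?_, if_neg ?_, sub_zero]
      · intro he
        rw [← he] at hv
        exact not_eexp_le_pair hk2 h1 h12 h2 j1 j2 hv
      · intro he
        have hpe : Finsupp.single j1 1 + Finsupp.single j2 1
            = Finsupp.single i1 1 + Finsupp.single i2 1 := by
          apply eq_of_le_of_degE_eq (he.le.trans hv)
          rw [degE_pair, degE_pair]
        have hj : j1 = i1 ∧ j2 = i2 := by
          rcases pair_eq hpe with ⟨e1, e2⟩ | ⟨e1, e2⟩
          · exact ⟨e1, e2⟩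
          · have v1 := congrArg Fin.val e1
            have v2 := congrArg Fin.val e2
            exact ⟨Fin.ext (by omega), Fin.ext (by omega)⟩
        apply hne
        rw [gform, hj.1, hj.2, ← hform]
        exact Set.mem_singleton f
    · intro v _; rw [coeff_zero]
    · intro p q _ _ hp hq v hv
      rw [coeff_add, hp v hv, hq v hv, add_zero]
    · intro c p _ hp v hv
      rw [smul_eq_mul, coeff_mul]
      apply Finset.sum_eq_zero
      intro x hx
      have hxv : x.2 ≤ v := by
        rw [Finset.HasAntidiagonal.mem_antidiagonal] at hx
        rw [← hx]
        exact le_add_self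
      rw [hp x.2 (le_trans hxv hv), mul_zero]
  have hc := hP f hmem (Finsupp.single i1 1 + Finsupp.single i2 1) le_rfl
  rw [hform, coeff_sub, coeff_monomial, coeff_monomial, if_pos rfl,
    if_neg (fun he => not_eexp_le_pair hk2 h1 h12 h2 i1 i2 he.le), sub_zero] at hc
  exact one_ne_zero hc

end SadK

/-- The set `G = ⋃_{ℓ=2}^{k} ξ_ℓ` of quadratic binomials generates the defining ideal
`I_{S_{a,d,k}}`, and it is a minimal generating set. -/
theorem toricIdeal_eq_span_Gset (a d : ℕ × ℕ) (k : ℕ) (hk : 2 ≤ k)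
    (hli : qLinIndep a d) (hmin : minGen a d k) :
    toricIdeal 𝕜 a d k = Ideal.span (Gset 𝕜 k) ∧
    ∀ f ∈ Gset 𝕜 k, f ∉ Ideal.span (Gset 𝕜 k \ {f}) := by
  have hk0 : 0 < k := by omega
  constructor
  · apply le_antisymm
    · intro f hf
      rw [SadK.toricIdeal_eq_ker] at hf
      obtain ⟨h, hsub, hsupp, hphi⟩ := SadK.exists_nf 𝕜 hk hk0 a d f
      have h0 : h = 0 := SadK.eq_zero_of_nf 𝕜 hli hk0 h hsupp
        (by rw [hphi]; exact RingHom.mem_ker.mp hf)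
      rw [h0, sub_zero] at hsub
      exact hsub
    · rw [Ideal.span_le]
      intro g hg
      rw [SadK.toricIdeal_eq_ker]
      exact RingHom.mem_ker.mpr (SadK.phi_Gset_zero 𝕜 hk a d hg)
  · intro f hf
    exact SadK.Gset_minimal 𝕜 hk hf
end

section
/- Let b ∈ ℕ² with b ∉ S_{a,d,k} and let μ be the smallest positive integer with μb ∈ S_{a,d,k}; suppose μb = Σ_{i=1}^{k+1} λᵢ(a+(i−1)d) with λᵢ ∈ ℕ and λ₁ ≠ 0 or λ_{k+1} ≠ 0. Then S_{a,d,k}^b := ⟨a, a+d, …, a+kd, b⟩ is the gluing of S_{a,d,k} and ⟨b⟩ by μb, and consequently I_{S_{a,d,k}^b} = I_{S_{a,d,k}} + ⟨y^μ − x₁^{λ₁}⋯x_{k+1}^{λ_{k+1}}⟩ in k[x₁,…,x_{k+1},y]. -/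
open MvPolynomial

variable (𝕜 : Type) [Field 𝕜]

/-- The affine semigroup `S_{a,d,k} = ⟨a, a+d, …, a+kd⟩ ⊆ ℕ²`. -/
def Sadk (a d : ℕ × ℕ) (k : ℕ) : AddSubmonoid (ℕ × ℕ) :=
  AddSubmonoid.closure {x : ℕ × ℕ | ∃ i : ℕ, i ≤ k ∧ x = a + i • d}

/-- The canonical embedding `ℕ² → ℤ²`. -/
def cz (s : ℕ × ℕ) : ℤ × ℤ := ((s.1 : ℤ), (s.2 : ℤ))

/-- The defining ideal `I_{S_{a,d,k}^b} ⊆ 𝕜[x₁,…,x_{k+1},y]`, the kernel of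
`xᵢ ↦ t^{a+(i−1)d}`, `y ↦ t^b`. -/
noncomputable def toricIdealExt (a d b : ℕ × ℕ) (k : ℕ) :
    Ideal (MvPolynomial (Fin (k + 2)) 𝕜) :=
  RingHom.ker ((aeval (Fin.lastCases (mono2 𝕜 b)
      (fun i : Fin (k + 1) => mono2 𝕜 (a + (i : ℕ) • d)))) :
    MvPolynomial (Fin (k + 2)) 𝕜 →ₐ[𝕜] MvPolynomial (Fin 2) 𝕜)


namespace Glue

variable {𝕜}

/-! ### `mono2` basics -/

noncomputable def emb2 (s : ℕ × ℕ) : Fin 2 →₀ ℕ :=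
  Finsupp.single 0 s.1 + Finsupp.single 1 s.2

lemma emb2_injective : Function.Injective emb2 := by
  intro s t h
  have h0 := congrArg (fun f => f (0 : Fin 2)) h
  have h1 := congrArg (fun f => f (1 : Fin 2)) h
  simp [emb2, Finsupp.single_apply] at h0 h1
  exact Prod.ext h0 h1

lemma emb2_add (s t : ℕ × ℕ) : emb2 (s + t) = emb2 s + emb2 t := by
  simp only [emb2, Prod.fst_add, Prod.snd_add, Finsupp.single_add]
  abel

lemma mono2_def (s : ℕ × ℕ) : mono2 𝕜 s = monomial (emb2 s) 1 := rfl

lemma mono2_mul (s t : ℕ × ℕ) : mono2 𝕜 (s + t) = mono2 𝕜 s * mono2 𝕜 t := by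
  rw [mono2_def, mono2_def, mono2_def, monomial_mul, emb2_add, one_mul]

lemma mono2_zero : mono2 𝕜 (0 : ℕ × ℕ) = 1 := by
  rw [mono2_def]; simp [emb2]

lemma mono2_pow (n : ℕ) (s : ℕ × ℕ) : mono2 𝕜 (n • s) = mono2 𝕜 s ^ n := by
  induction n with
  | zero => simpa using mono2_zero
  | succ m ih => rw [succ_nsmul, mono2_mul, ih, pow_succ]

lemma mono2_sum {ι : Type*} (S : Finset ι) (f : ι → ℕ × ℕ) :
    mono2 𝕜 (∑ i ∈ S, f i) = ∏ i ∈ S, mono2 𝕜 (f i) := by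
  classical
  induction S using Finset.cons_induction with
  | empty => simpa using mono2_zero
  | cons i S hi ih => rw [Finset.sum_cons, Finset.prod_cons, mono2_mul, ih]

/-! ### kernels of monomial maps -/

lemma aeval_monomial_mono2 {σ : Type*} (g : σ → ℕ × ℕ) (u : σ →₀ ℕ) (c : 𝕜) :
    aeval (fun i => mono2 𝕜 (g i)) (monomial u c)
      = c • mono2 𝕜 (∑ i ∈ u.support, u i • g i) := by
  rw [aeval_monomial, mono2_sum]
  rw [Finsupp.prod]
  simp only [mono2_pow]
  rw [Algebra.smul_def]

lemma ker_mem_span {σ τ : Type*} (ψ : (σ →₀ ℕ) → (τ →₀ ℕ))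
    (F : MvPolynomial σ 𝕜 →ₐ[𝕜] MvPolynomial τ 𝕜)
    (hF : ∀ u c, F (monomial u c) = monomial (ψ u) c) :
    ∀ (n : ℕ) (f : MvPolynomial σ 𝕜), f.support.card ≤ n → F f = 0 →
      f ∈ Submodule.span 𝕜 {p : MvPolynomial σ 𝕜 |
        ∃ u v, ψ u = ψ v ∧ p = monomial u 1 - monomial v 1} := by
  classical
  intro n
  induction n with
  | zero =>
      intro f hcard _
      have : f = 0 := MvPolynomial.support_eq_empty.mp
        (Finset.card_eq_zero.mp (Nat.le_zero.mp hcard))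
      simp [this]
  | succ n ih =>
      intro f hcard hf
      by_cases h0 : f = 0
      · simp [h0]
      obtain ⟨u, hu⟩ := Finset.nonempty_iff_ne_empty.mpr
        (fun h => h0 (MvPolynomial.support_eq_empty.mp h))
      have hcu : coeff u f ≠ 0 := MvPolynomial.mem_support_iff.mp hu
      have hsum : ∑ w ∈ f.support.filter (fun w => ψ w = ψ u), coeff w f = 0 := by
        have h1 : F f = ∑ w ∈ f.support, monomial (ψ w) (coeff w f) := by
          conv_lhs => rw [f.as_sum]
          rw [map_sum]
          exact Finset.sum_congr rfl fun w _ => hF w _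
        have h2 := congrArg (coeff (ψ u)) hf
        rw [h1] at h2
        simp only [MvPolynomial.coeff_sum, coeff_monomial, coeff_zero] at h2
        rw [Finset.sum_filter]
        exact h2
      have hv : ∃ v ∈ f.support.filter (fun w => ψ w = ψ u), v ≠ u ∧ coeff v f ≠ 0 := by
        by_contra h
        push_neg at h
        have : ∑ w ∈ f.support.filter (fun w => ψ w = ψ u), coeff w f = coeff u f := by
          apply Finset.sum_eq_single_of_mem
          · exact Finset.mem_filter.mpr ⟨hu, rfl⟩
          · intro w hw hwu
            exact h w hw hwu
        exact hcu (this ▸ hsum)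
      obtain ⟨v, hvmem, hvu, hcv⟩ := hv
      have hψv : ψ v = ψ u := by
        simpa using (Finset.mem_filter.mp hvmem).2
      have hvsupp : v ∈ f.support := (Finset.mem_filter.mp hvmem).1
      set c := coeff u f with hc
      set p : MvPolynomial σ 𝕜 := monomial u 1 - monomial v 1 with hp
      set g : MvPolynomial σ 𝕜 := f - c • p with hg
      have hFg : F g = 0 := by
        have hFp : F p = 0 := by
          rw [hp, map_sub, hF, hF, hψv, sub_self]
        rw [hg, map_sub, map_smul, hFp, smul_zero, sub_zero, hf]
      have hgsupp : g.support ⊆ f.support.erase u := by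
        intro w hw
        have hcw : coeff w g ≠ 0 := MvPolynomial.mem_support_iff.mp hw
        rw [hg, hp] at hcw
        simp only [coeff_sub, coeff_smul, coeff_monomial, smul_eq_mul] at hcw
        by_cases hwu : w = u
        · exfalso
          subst hwu
          rw [if_pos rfl, if_neg hvu] at hcw
          simp [hc] at hcw
        · refine Finset.mem_erase.mpr ⟨hwu, ?_⟩
          by_cases hwv : w = v
          · exact hwv ▸ hvsupp
          · rw [if_neg (fun h : u = w => hwu h.symm),
              if_neg (fun h : v = w => hwv h.symm)] at hcw
            simp only [sub_zero, mul_zero, sub_zero] at hcw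
            exact MvPolynomial.mem_support_iff.mpr hcw
      have hcard' : g.support.card ≤ n := by
        have h1 := Finset.card_le_card hgsupp
        rw [Finset.card_erase_of_mem hu] at h1
        omega
      have hfg : f = g + c • p := by rw [hg]; ring
      rw [hfg]
      exact Submodule.add_mem _ (ih g hcard' hFg)
        (Submodule.smul_mem _ _ (Submodule.subset_span ⟨u, v, hψv.symm, rfl⟩))

/-! ### arithmetic in `ℤ × ℤ` -/

lemma cz_add (s t : ℕ × ℕ) : cz (s + t) = cz s + cz t := by
  simp [cz, Prod.ext_iff]
lemma cz_zero : cz 0 = 0 := by simp [cz, Prod.ext_iff]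
lemma cz_nsmul (n : ℕ) (s : ℕ × ℕ) : cz (n • s) = (n : ℤ) • cz s := by
  simp [cz, Prod.ext_iff, Prod.smul_fst, Prod.smul_snd, smul_eq_mul]
lemma cz_injective : Function.Injective cz := by
  intro s t h
  rw [cz, cz, Prod.ext_iff] at h
  simp only at h
  exact Prod.ext (by exact_mod_cast h.1) (by exact_mod_cast h.2)
lemma cz_combo (a d : ℕ × ℕ) (p q : ℕ) :
    cz (p • a + q • d) = (p : ℤ) • cz a + (q : ℤ) • cz d := by
  rw [cz_add, cz_nsmul, cz_nsmul]

noncomputable def czHom : (ℕ × ℕ) →+ (ℤ × ℤ) := ⟨⟨cz, cz_zero⟩, cz_add⟩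

lemma indep_int {a d : ℕ × ℕ} (hli : qLinIndep a d) :
    ∀ x y : ℤ, x • cz a + y • cz d = 0 → x = 0 ∧ y = 0 := by
  intro x y h
  rw [Prod.ext_iff] at h
  simp only [cz, Prod.fst_add, Prod.snd_add, Prod.smul_fst, Prod.smul_snd, smul_eq_mul,
    Prod.fst_zero, Prod.snd_zero] at h
  have hq := LinearIndependent.pair_iff.mp hli (x : ℚ) (y : ℚ) (by
    rw [Prod.ext_iff]
    constructor
    · simp only [Prod.fst_add, Prod.smul_fst, smul_eq_mul, Prod.fst_zero]
      exact_mod_cast congrArg (Int.cast : ℤ → ℚ) h.1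
    · simp only [Prod.snd_add, Prod.smul_snd, smul_eq_mul, Prod.snd_zero]
      exact_mod_cast congrArg (Int.cast : ℤ → ℚ) h.2)
  exact ⟨by exact_mod_cast hq.1, by exact_mod_cast hq.2⟩

lemma indep_int' {a d : ℕ × ℕ} (hli : qLinIndep a d) {x y x' y' : ℤ}
    (h : x • cz a + y • cz d = x' • cz a + y' • cz d) : x = x' ∧ y = y' := by
  have h0 : (x - x') • cz a + (y - y') • cz d = 0 := by
    rw [sub_smul, sub_smul]; rw [← sub_eq_zero] at h; rw [← h]; abel
  obtain ⟨h1, h2⟩ := indep_int hli _ _ h0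
  constructor <;> omega

lemma mem_Sadk_combo (a d : ℕ × ℕ) (k : ℕ) :
    ∀ X Y : ℕ, Y ≤ k * X → X • a + Y • d ∈ Sadk a d k := by
  intro X
  induction X with
  | zero =>
      intro Y hY
      have hY0 : Y = 0 := by omega
      subst hY0
      simpa using (Sadk a d k).zero_mem
  | succ X ih =>
      intro Y hY
      have hgen : a + min Y k • d ∈ Sadk a d k :=
        AddSubmonoid.subset_closure ⟨min Y k, min_le_right _ _, rfl⟩
      have hrest : X • a + (Y - min Y k) • d ∈ Sadk a d k := by
        refine ih (Y - min Y k) ?_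
        rcases le_or_gt Y k with h | h
        · simp [min_eq_left h]
        · have h' : min Y k = k := min_eq_right h.le
          rw [h']
          have hx : k * (X + 1) = k * X + k := by ring
          omega
      have hsplit : (X + 1) • a + Y • d
          = (a + min Y k • d) + (X • a + (Y - min Y k) • d) := by
        have hm : min Y k + (Y - min Y k) = Y := by omega
        rw [Prod.ext_iff]
        constructor <;>
        · simp only [Prod.fst_add, Prod.snd_add, Prod.smul_fst, Prod.smul_snd, smul_eq_mul]
          nlinarith [hm]
      rw [hsplit]
      exact add_mem hgen hrest

section Main

variable {a d b : ℕ × ℕ} {k μ : ℕ} {lam : Fin (k + 1) → ℕ}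

lemma muLM (hrep : μ • b = ∑ i : Fin (k + 1), lam i • (a + (i : ℕ) • d)) :
    μ • b = (∑ i : Fin (k + 1), lam i) • a + (∑ i : Fin (k + 1), lam i * (i : ℕ)) • d := by
  have h : ∀ i : Fin (k + 1), lam i • (a + (i : ℕ) • d) = lam i • a + (lam i * (i : ℕ)) • d :=
    fun i => by rw [smul_add, smul_smul]
  rw [hrep, Finset.sum_congr rfl (fun i _ => h i), Finset.sum_add_distrib,
    ← Finset.sum_smul, ← Finset.sum_smul]

lemma L_pos (hlam : lam 0 ≠ 0 ∨ lam (Fin.last k) ≠ 0) : 0 < ∑ i : Fin (k + 1), lam i := by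
  rcases hlam with h | h
  · calc 0 < lam 0 := Nat.pos_of_ne_zero h
      _ ≤ _ := Finset.single_le_sum (fun i _ => Nat.zero_le _) (Finset.mem_univ _)
  · calc 0 < lam (Fin.last k) := Nat.pos_of_ne_zero h
      _ ≤ _ := Finset.single_le_sum (fun i _ => Nat.zero_le _) (Finset.mem_univ _)

lemma M_le : (∑ i : Fin (k + 1), lam i * (i : ℕ)) ≤ k * ∑ i : Fin (k + 1), lam i := by
  rw [Finset.mul_sum]
  exact Finset.sum_le_sum fun i _ => by
    calc lam i * (i : ℕ) ≤ lam i * k := Nat.mul_le_mul_left _ (Fin.is_le i)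
      _ = k * lam i := Nat.mul_comm _ _

lemma nb_mem_Sadk (hli : qLinIndep a d)
    (hrep : μ • b = ∑ i : Fin (k + 1), lam i • (a + (i : ℕ) • d))
    (hlam : lam 0 ≠ 0 ∨ lam (Fin.last k) ≠ 0) (hμpos : 0 < μ)
    (n : ℕ)
    (hmem : cz (n • b) ∈ AddSubgroup.closure (cz '' {x : ℕ × ℕ | ∃ i : ℕ, i ≤ k ∧ x = a + i • d})) :
    n • b ∈ Sadk a d k := by
  have hsub : AddSubgroup.closure (cz '' {x : ℕ × ℕ | ∃ i : ℕ, i ≤ k ∧ x = a + i • d})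
      ≤ AddSubgroup.closure {cz a, cz d} := by
    rw [AddSubgroup.closure_le]
    rintro w ⟨x, ⟨i, hik, rfl⟩, rfl⟩
    have hw : cz (a + i • d) = cz a + (i : ℤ) • cz d := by
      rw [cz_add, cz_nsmul]
    rw [SetLike.mem_coe, hw]
    have h1 : cz a ∈ AddSubgroup.closure ({cz a, cz d} : Set (ℤ × ℤ)) :=
      AddSubgroup.subset_closure (by simp)
    have h2 : cz d ∈ AddSubgroup.closure ({cz a, cz d} : Set (ℤ × ℤ)) :=
      AddSubgroup.subset_closure (by simp)
    exact add_mem h1 (zsmul_mem h2 _)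
  obtain ⟨x, y, hxy⟩ := AddSubgroup.mem_closure_pair.mp (hsub hmem)
  set L := ∑ i : Fin (k + 1), lam i with hLdef
  set M := ∑ i : Fin (k + 1), lam i * (i : ℕ) with hMdef
  have hLM : μ • b = L • a + M • d := muLM hrep
  have hL : 0 < L := L_pos hlam
  have hM : M ≤ k * L := M_le
  have h1 : (μ : ℤ) • cz (n • b) = ((n * L : ℕ) : ℤ) • cz a + ((n * M : ℕ) : ℤ) • cz d := by
    have hh : μ • (n • b) = (n * L) • a + (n * M) • d := by
      rw [smul_comm, hLM, smul_add, smul_smul, smul_smul]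
    rw [← cz_nsmul, hh, cz_combo]
  have h2 : (μ : ℤ) • cz (n • b) = ((μ : ℤ) * x) • cz a + ((μ : ℤ) * y) • cz d := by
    rw [← hxy, smul_add, smul_smul, smul_smul]
  obtain ⟨hx, hy⟩ := indep_int' hli (h2.symm.trans h1)
  have hx0 : 0 ≤ x := by
    by_contra h
    push_neg at h
    have : (μ : ℤ) * x < 0 := mul_neg_of_pos_of_neg (by exact_mod_cast hμpos) h
    rw [hx] at this
    exact absurd this (not_lt.mpr (Int.natCast_nonneg _))
  have hy0 : 0 ≤ y := by
    by_contra h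
    push_neg at h
    have : (μ : ℤ) * y < 0 := mul_neg_of_pos_of_neg (by exact_mod_cast hμpos) h
    rw [hy] at this
    exact absurd this (not_lt.mpr (Int.natCast_nonneg _))
  have hyx : y ≤ (k : ℤ) * x := by
    have hμy : (μ : ℤ) * y ≤ (μ : ℤ) * ((k : ℤ) * x) := by
      rw [hy]
      have hr : (μ : ℤ) * ((k : ℤ) * x) = (k : ℤ) * ((μ : ℤ) * x) := by ring
      rw [hr, hx]
      exact_mod_cast Nat.mul_le_mul_left n hM |>.trans_eq (by ring)
    exact le_of_mul_le_mul_left hμy (by exact_mod_cast hμpos)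
  have hcz : cz (n • b) = cz (x.toNat • a + y.toNat • d) := by
    rw [cz_combo, Int.toNat_of_nonneg hx0, Int.toNat_of_nonneg hy0, hxy]
  rw [cz_injective hcz]
  apply mem_Sadk_combo
  have hfin : (y.toNat : ℤ) ≤ ((k * x.toNat : ℕ) : ℤ) := by
    push_cast
    rw [Int.toNat_of_nonneg hx0, Int.toNat_of_nonneg hy0]
    exact hyx
  exact_mod_cast hfin

lemma sig_mem (w : Fin (k + 1) → ℕ) :
    cz (∑ i : Fin (k + 1), w i • (a + (i : ℕ) • d))
      ∈ AddSubgroup.closure (cz '' {x : ℕ × ℕ | ∃ i : ℕ, i ≤ k ∧ x = a + i • d}) := by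
  rw [show cz = ⇑czHom from rfl, map_sum]
  refine AddSubgroup.sum_mem _ fun i _ => ?_
  rw [map_nsmul]
  refine nsmul_mem (AddSubgroup.subset_closure ?_) _
  exact ⟨a + (i : ℕ) • d, ⟨(i : ℕ), Fin.is_le i, rfl⟩, rfl⟩

lemma cz_mu_mem (hrep : μ • b = ∑ i : Fin (k + 1), lam i • (a + (i : ℕ) • d)) :
    cz (μ • b) ∈ AddSubgroup.closure (cz '' {x : ℕ × ℕ | ∃ i : ℕ, i ≤ k ∧ x = a + i • d}) := by
  rw [hrep]
  exact sig_mem lam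

lemma inter_eq (hli : qLinIndep a d) (hμpos : 0 < μ)
    (hμmin : ∀ ν : ℕ, 0 < ν → ν • b ∈ Sadk a d k → μ ≤ ν)
    (hrep : μ • b = ∑ i : Fin (k + 1), lam i • (a + (i : ℕ) • d))
    (hlam : lam 0 ≠ 0 ∨ lam (Fin.last k) ≠ 0) :
    AddSubgroup.closure (cz '' {x : ℕ × ℕ | ∃ i : ℕ, i ≤ k ∧ x = a + i • d}) ⊓
      AddSubgroup.closure ({cz b} : Set (ℤ × ℤ)) = AddSubgroup.zmultiples (cz (μ • b)) := by
  apply le_antisymm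
  · intro z hz
    rw [AddSubgroup.mem_inf] at hz
    obtain ⟨hz1, hz2⟩ := hz
    obtain ⟨n, rfl⟩ := AddSubgroup.mem_closure_singleton.mp hz2
    set e : ℕ := Int.gcd n μ with he
    have hepos : 0 < e := Int.gcd_pos_iff.mpr (Or.inr (by exact_mod_cast hμpos.ne'))
    have hbez : (e : ℤ) = n * Int.gcdA n μ + μ * Int.gcdB n μ := Int.gcd_eq_gcd_ab n μ
    have hemem : cz (e • b) ∈
        AddSubgroup.closure (cz '' {x : ℕ × ℕ | ∃ i : ℕ, i ≤ k ∧ x = a + i • d}) := by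
      rw [cz_nsmul]
      have hsplit : (e : ℤ) • cz b
          = Int.gcdA n μ • (n • cz b) + Int.gcdB n μ • ((μ : ℤ) • cz b) := by
        rw [smul_smul, smul_smul, ← add_smul]
        congr 1
        rw [hbez]; ring
      rw [hsplit]
      refine add_mem (zsmul_mem hz1 _) (zsmul_mem ?_ _)
      rw [← cz_nsmul]
      exact cz_mu_mem hrep
    have hSe : e • b ∈ Sadk a d k := nb_mem_Sadk hli hrep hlam hμpos e hemem
    have hμe : μ ≤ e := hμmin e hepos hSe
    have hedvd : e ∣ μ := Int.natCast_dvd_natCast.mp (Int.gcd_dvd_right n μ)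
    have heq : e = μ := le_antisymm (Nat.le_of_dvd hμpos hedvd) hμe
    have hμn : (μ : ℤ) ∣ n := by
      rw [← heq]
      exact_mod_cast (Int.gcd_dvd_left n μ : ((Int.gcd n μ : ℕ) : ℤ) ∣ n)
    obtain ⟨m, rfl⟩ := hμn
    rw [AddSubgroup.mem_zmultiples_iff]
    refine ⟨m, ?_⟩
    rw [cz_nsmul, smul_smul]
    congr 1
    ring
  · have h1 : cz (μ • b) ∈
        AddSubgroup.closure (cz '' {x : ℕ × ℕ | ∃ i : ℕ, i ≤ k ∧ x = a + i • d}) ⊓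
          AddSubgroup.closure ({cz b} : Set (ℤ × ℤ)) := by
      rw [AddSubgroup.mem_inf]
      exact ⟨cz_mu_mem hrep,
        AddSubgroup.mem_closure_singleton.mpr ⟨(μ : ℤ), by rw [cz_nsmul, natCast_zsmul]⟩⟩
    rwa [← AddSubgroup.zmultiples_le] at h1

lemma exp_eq (hli : qLinIndep a d) (hb : b ∉ Sadk a d k) (hμpos : 0 < μ)
    (hμmin : ∀ ν : ℕ, 0 < ν → ν • b ∈ Sadk a d k → μ ≤ ν)
    (hrep : μ • b = ∑ i : Fin (k + 1), lam i • (a + (i : ℕ) • d))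
    (hlam : lam 0 ≠ 0 ∨ lam (Fin.last k) ≠ 0)
    {w w' : Fin (k + 1) → ℕ} {r r' : ℕ} (hr : r < μ) (hr' : r' < μ)
    (h : (∑ i : Fin (k + 1), w i • (a + (i : ℕ) • d)) + r • b
        = (∑ i : Fin (k + 1), w' i • (a + (i : ℕ) • d)) + r' • b) :
    r = r' ∧ (∑ i : Fin (k + 1), w i • (a + (i : ℕ) • d))
        = ∑ i : Fin (k + 1), w' i • (a + (i : ℕ) • d) := by
  have hbne : cz b ≠ 0 := by
    intro h0
    apply hb
    have hb0 : b = 0 := cz_injective (by rw [h0, cz_zero])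
    rw [hb0]; exact zero_mem _
  have hcz := congrArg cz h
  rw [cz_add, cz_add, cz_nsmul, cz_nsmul] at hcz
  have h3 : ((r : ℤ) - (r' : ℤ)) • cz b
      = cz (∑ i : Fin (k + 1), w' i • (a + (i : ℕ) • d))
        - cz (∑ i : Fin (k + 1), w i • (a + (i : ℕ) • d)) := by
    rw [sub_smul, sub_eq_sub_iff_add_eq_add, add_comm ((r : ℤ) • cz b) _]
    exact hcz
  have hmemG : ((r : ℤ) - (r' : ℤ)) • cz b ∈ AddSubgroup.zmultiples (cz (μ • b)) := by
    rw [← inter_eq hli hμpos hμmin hrep hlam, AddSubgroup.mem_inf]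
    constructor
    · rw [h3]; exact sub_mem (sig_mem _) (sig_mem _)
    · have hcb : cz b ∈ AddSubgroup.closure ({cz b} : Set (ℤ × ℤ)) :=
        AddSubgroup.subset_closure rfl
      exact zsmul_mem hcb _
  obtain ⟨m, hm⟩ := AddSubgroup.mem_zmultiples_iff.mp hmemG
  rw [cz_nsmul, smul_smul] at hm
  have hzero : ∀ t : ℤ, t • cz b = 0 → t = 0 := by
    intro t ht
    by_contra htne
    apply hbne
    have h1 := congrArg Prod.fst ht
    have h2 := congrArg Prod.snd ht
    simp only [Prod.smul_fst, Prod.smul_snd, smul_eq_mul, Prod.fst_zero, Prod.snd_zero] at h1 h2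
    have hb1 : (cz b).1 = 0 := by
      rcases mul_eq_zero.mp h1 with hcase | hcase
      · exact absurd hcase htne
      · exact hcase
    have hb2 : (cz b).2 = 0 := by
      rcases mul_eq_zero.mp h2 with hcase | hcase
      · exact absurd hcase htne
      · exact hcase
    exact Prod.ext hb1 hb2
  have hmμ : m * (μ : ℤ) = (r : ℤ) - (r' : ℤ) := by
    have h0 : (m * (μ : ℤ) - ((r : ℤ) - (r' : ℤ))) • cz b = 0 := by
      rw [sub_smul, hm, sub_self]
    have := hzero _ h0
    omega
  have hμZ : (0 : ℤ) < (μ : ℤ) := by exact_mod_cast hμpos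
  have hrZ : (r : ℤ) < (μ : ℤ) := by exact_mod_cast hr
  have hr'Z : (r' : ℤ) < (μ : ℤ) := by exact_mod_cast hr'
  have hm0 : m = 0 := by
    rcases lt_trichotomy m 0 with hx | hx | hx
    · nlinarith [mul_le_mul_of_nonneg_right (show m ≤ -1 by omega) hμZ.le,
        Int.natCast_nonneg r, Int.natCast_nonneg r']
    · exact hx
    · nlinarith [mul_le_mul_of_nonneg_right (show (1 : ℤ) ≤ m by omega) hμZ.le,
        Int.natCast_nonneg r, Int.natCast_nonneg r']
  have hrr : r = r' := by
    rw [hm0] at hmμ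
    omega
  subst hrr
  exact ⟨rfl, add_right_cancel h⟩

end Main

/-! ### polynomial lemmas -/

section Poly

variable {a d b : ℕ × ℕ} {k μ : ℕ} {lam : Fin (k + 1) → ℕ}

def gbig (a d b : ℕ × ℕ) (k : ℕ) : Fin (k + 2) → ℕ × ℕ :=
  Fin.lastCases b (fun i => a + (i : ℕ) • d)

lemma gbig_castSucc (i : Fin (k + 1)) : gbig a d b k (Fin.castSucc i) = a + (i : ℕ) • d :=
  Fin.lastCases_castSucc i

lemma gbig_last : gbig a d b k (Fin.last (k + 1)) = b := Fin.lastCases_last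

lemma phi_decomp (u : Fin (k + 2) →₀ ℕ) :
    (∑ j ∈ u.support, u j • gbig a d b k j)
      = (∑ i : Fin (k + 1), u (Fin.castSucc i) • (a + (i : ℕ) • d))
        + u (Fin.last (k + 1)) • b := by
  have h1 : (∑ j ∈ u.support, u j • gbig a d b k j)
      = ∑ j : Fin (k + 2), u j • gbig a d b k j :=
    Finset.sum_subset (Finset.subset_univ _)
      (fun j _ hj => by rw [Finsupp.notMem_support_iff.mp hj, zero_smul])
  rw [h1, Fin.sum_univ_castSucc]
  simp only [gbig_castSucc, gbig_last]

lemma monomial_decomp (u : Fin (k + 2) →₀ ℕ) :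
    (monomial u 1 : MvPolynomial (Fin (k + 2)) 𝕜)
      = (∏ i : Fin (k + 1), X (Fin.castSucc i) ^ u (Fin.castSucc i))
        * X (Fin.last (k + 1)) ^ u (Fin.last (k + 1)) := by
  have h1 : (monomial u 1 : MvPolynomial (Fin (k + 2)) 𝕜) = ∏ j : Fin (k + 2), X j ^ u j := by
    rw [monomial_eq, C_1, one_mul, Finsupp.prod_fintype _ _ (fun i => pow_zero _)]
  rw [h1, Fin.prod_univ_castSucc]

lemma aeval_prod_pow (w : Fin (k + 1) → ℕ) :
    ((aeval fun i : Fin (k + 1) => mono2 𝕜 (a + (i : ℕ) • d)) :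
        MvPolynomial (Fin (k + 1)) 𝕜 →ₐ[𝕜] MvPolynomial (Fin 2) 𝕜)
      (∏ i : Fin (k + 1), X i ^ w i)
      = mono2 𝕜 (∑ i : Fin (k + 1), w i • (a + (i : ℕ) • d)) := by
  rw [map_prod, mono2_sum]
  refine Finset.prod_congr rfl fun i _ => ?_
  rw [map_pow, aeval_X, mono2_pow]

lemma reduce_mem (A : MvPolynomial (Fin (k + 2)) 𝕜) (s : ℕ) :
    A * X (Fin.last (k + 1)) ^ s
      - A * (∏ i : Fin (k + 1), X (Fin.castSucc i) ^ lam i) ^ (s / μ)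
        * X (Fin.last (k + 1)) ^ (s % μ)
      ∈ Ideal.span {(X (Fin.last (k + 1)) : MvPolynomial (Fin (k + 2)) 𝕜) ^ μ
          - ∏ i : Fin (k + 1), X (Fin.castSucc i) ^ lam i} := by
  rw [Ideal.mem_span_singleton]
  have hs : (X (Fin.last (k + 1)) : MvPolynomial (Fin (k + 2)) 𝕜) ^ s
      = ((X (Fin.last (k + 1)) : MvPolynomial (Fin (k + 2)) 𝕜) ^ μ) ^ (s / μ)
        * X (Fin.last (k + 1)) ^ (s % μ) := by
    rw [← pow_mul, ← pow_add]
    congr 1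
    exact (Nat.div_add_mod s μ).symm
  have heq : A * X (Fin.last (k + 1)) ^ s
      - A * (∏ i : Fin (k + 1), X (Fin.castSucc i) ^ lam i) ^ (s / μ)
        * X (Fin.last (k + 1)) ^ (s % μ)
      = A * X (Fin.last (k + 1)) ^ (s % μ)
        * (((X (Fin.last (k + 1)) : MvPolynomial (Fin (k + 2)) 𝕜) ^ μ) ^ (s / μ)
          - (∏ i : Fin (k + 1), X (Fin.castSucc i) ^ lam i) ^ (s / μ)) := by
    rw [hs]; ring
  rw [heq]
  exact Dvd.dvd.mul_left (sub_dvd_pow_sub_pow _ _ _) _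

lemma binomial_mem
    (hli : qLinIndep a d) (hb : b ∉ Sadk a d k) (hμpos : 0 < μ)
    (hμmin : ∀ ν : ℕ, 0 < ν → ν • b ∈ Sadk a d k → μ ≤ ν)
    (hrep : μ • b = ∑ i : Fin (k + 1), lam i • (a + (i : ℕ) • d))
    (hlam : lam 0 ≠ 0 ∨ lam (Fin.last k) ≠ 0)
    (u v : Fin (k + 2) →₀ ℕ)
    (huv : ∑ j ∈ u.support, u j • gbig a d b k j = ∑ j ∈ v.support, v j • gbig a d b k j) :
    (monomial u 1 - monomial v 1 : MvPolynomial (Fin (k + 2)) 𝕜) ∈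
      (toricIdeal 𝕜 a d k).map
          (rename (Fin.castSucc : Fin (k + 1) → Fin (k + 2)) :
            MvPolynomial (Fin (k + 1)) 𝕜 →ₐ[𝕜] MvPolynomial (Fin (k + 2)) 𝕜) ⊔
        Ideal.span {(X (Fin.last (k + 1)) : MvPolynomial (Fin (k + 2)) 𝕜) ^ μ -
          ∏ i : Fin (k + 1), X (Fin.castSucc i) ^ lam i} := by
  classical
  have hprod : ∀ (w : Fin (k + 2) →₀ ℕ),
      (∏ i : Fin (k + 1), (X (Fin.castSucc i) : MvPolynomial (Fin (k + 2)) 𝕜)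
          ^ (w (Fin.castSucc i) + lam i * (w (Fin.last (k + 1)) / μ)))
        = (∏ i : Fin (k + 1), X (Fin.castSucc i) ^ w (Fin.castSucc i))
          * (∏ i : Fin (k + 1), X (Fin.castSucc i) ^ lam i) ^ (w (Fin.last (k + 1)) / μ) := by
    intro w
    rw [← Finset.prod_pow, ← Finset.prod_mul_distrib]
    exact Finset.prod_congr rfl fun i _ => by rw [pow_add, pow_mul]
  have hred : ∀ (w : Fin (k + 2) →₀ ℕ),
      (monomial w 1 : MvPolynomial (Fin (k + 2)) 𝕜)
        - (∏ i : Fin (k + 1), X (Fin.castSucc i)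
            ^ (w (Fin.castSucc i) + lam i * (w (Fin.last (k + 1)) / μ)))
          * X (Fin.last (k + 1)) ^ (w (Fin.last (k + 1)) % μ)
        ∈ Ideal.span {(X (Fin.last (k + 1)) : MvPolynomial (Fin (k + 2)) 𝕜) ^ μ -
            ∏ i : Fin (k + 1), X (Fin.castSucc i) ^ lam i} := by
    intro w
    rw [monomial_decomp, hprod w]
    exact reduce_mem _ _
  have hsig : ∀ (w : Fin (k + 2) →₀ ℕ),
      (∑ i : Fin (k + 1),
          (w (Fin.castSucc i) + lam i * (w (Fin.last (k + 1)) / μ)) • (a + (i : ℕ) • d))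
        + (w (Fin.last (k + 1)) % μ) • b
      = ∑ j ∈ w.support, w j • gbig a d b k j := by
    intro w
    rw [phi_decomp]
    have h2 : ∀ i : Fin (k + 1),
        (lam i * (w (Fin.last (k + 1)) / μ)) • (a + (i : ℕ) • d)
          = (w (Fin.last (k + 1)) / μ) • (lam i • (a + (i : ℕ) • d)) := fun i => by
      rw [smul_smul, mul_comm]
    have h1 : ∑ i : Fin (k + 1),
        (w (Fin.castSucc i) + lam i * (w (Fin.last (k + 1)) / μ)) • (a + (i : ℕ) • d)
        = (∑ i : Fin (k + 1), w (Fin.castSucc i) • (a + (i : ℕ) • d))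
          + ((w (Fin.last (k + 1)) / μ) * μ) • b := by
      simp only [add_smul, Finset.sum_add_distrib]
      congr 1
      rw [Finset.sum_congr rfl fun i _ => h2 i, ← Finset.smul_sum, ← hrep, smul_smul]
    rw [h1, add_assoc, ← add_nsmul]
    congr 2
    rw [mul_comm]
    exact Nat.div_add_mod _ _
  have hkey := exp_eq (w := fun i : Fin (k + 1) =>
      u (Fin.castSucc i) + lam i * (u (Fin.last (k + 1)) / μ))
    (w' := fun i : Fin (k + 1) =>
      v (Fin.castSucc i) + lam i * (v (Fin.last (k + 1)) / μ))
    hli hb hμpos hμmin hrep hlam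
    (Nat.mod_lt _ hμpos) (Nat.mod_lt _ hμpos)
    (by rw [hsig u, hsig v, huv])
  have hsmall : (∏ i : Fin (k + 1), (X i : MvPolynomial (Fin (k + 1)) 𝕜)
        ^ (u (Fin.castSucc i) + lam i * (u (Fin.last (k + 1)) / μ)))
      - (∏ i : Fin (k + 1), (X i : MvPolynomial (Fin (k + 1)) 𝕜)
        ^ (v (Fin.castSucc i) + lam i * (v (Fin.last (k + 1)) / μ)))
      ∈ toricIdeal 𝕜 a d k := by
    unfold toricIdeal
    rw [RingHom.mem_ker, map_sub, aeval_prod_pow, aeval_prod_pow, hkey.2, sub_self]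
  have hren := Ideal.mem_map_of_mem
    (rename (Fin.castSucc : Fin (k + 1) → Fin (k + 2)) :
      MvPolynomial (Fin (k + 1)) 𝕜 →ₐ[𝕜] MvPolynomial (Fin (k + 2)) 𝕜) hsmall
  have hrn : ∀ (w : Fin (k + 1) → ℕ),
      (rename (Fin.castSucc : Fin (k + 1) → Fin (k + 2)) :
        MvPolynomial (Fin (k + 1)) 𝕜 →ₐ[𝕜] MvPolynomial (Fin (k + 2)) 𝕜)
        (∏ i : Fin (k + 1), X i ^ w i)
      = ∏ i : Fin (k + 1), X (Fin.castSucc i) ^ w i := by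
    intro w
    rw [map_prod]
    exact Finset.prod_congr rfl fun i _ => by rw [map_pow, rename_X]
  rw [map_sub, hrn, hrn] at hren
  have h5 : (monomial u 1 - monomial v 1 : MvPolynomial (Fin (k + 2)) 𝕜)
      = ((monomial u 1 : MvPolynomial (Fin (k + 2)) 𝕜)
          - (∏ i : Fin (k + 1), X (Fin.castSucc i)
              ^ (u (Fin.castSucc i) + lam i * (u (Fin.last (k + 1)) / μ)))
            * X (Fin.last (k + 1)) ^ (u (Fin.last (k + 1)) % μ))
        - ((monomial v 1 : MvPolynomial (Fin (k + 2)) 𝕜)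
          - (∏ i : Fin (k + 1), X (Fin.castSucc i)
              ^ (v (Fin.castSucc i) + lam i * (v (Fin.last (k + 1)) / μ)))
            * X (Fin.last (k + 1)) ^ (v (Fin.last (k + 1)) % μ))
        + ((∏ i : Fin (k + 1), X (Fin.castSucc i)
              ^ (u (Fin.castSucc i) + lam i * (u (Fin.last (k + 1)) / μ)))
          - (∏ i : Fin (k + 1), X (Fin.castSucc i)
              ^ (v (Fin.castSucc i) + lam i * (v (Fin.last (k + 1)) / μ))))
          * X (Fin.last (k + 1)) ^ (u (Fin.last (k + 1)) % μ) := by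
    rw [← hkey.1]
    ring
  rw [h5]
  exact add_mem (sub_mem (Ideal.mem_sup_right (hred u)) (Ideal.mem_sup_right (hred v)))
    (Ideal.mem_sup_left (Ideal.mul_mem_right _ _ hren))

end Poly
end Glue

/-- `S_{a,d,k}^b` is the gluing of `S_{a,d,k}` and `⟨b⟩` by `μb`, and consequently
`I_{S_{a,d,k}^b} = I_{S_{a,d,k}} + ⟨y^μ − x₁^{λ₁} ⋯ x_{k+1}^{λ_{k+1}}⟩`. -/
theorem gluing_and_toricIdealExt (a d b : ℕ × ℕ) (k : ℕ) (hk : 2 ≤ k)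
    (hli : qLinIndep a d) (hmin : minGen a d k)
    (hb : b ∉ Sadk a d k) (μ : ℕ) (hμpos : 0 < μ) (hμb : μ • b ∈ Sadk a d k)
    (hμmin : ∀ ν : ℕ, 0 < ν → ν • b ∈ Sadk a d k → μ ≤ ν)
    (lam : Fin (k + 1) → ℕ) (hrep : μ • b = ∑ i : Fin (k + 1), lam i • (a + (i : ℕ) • d))
    (hlam : lam 0 ≠ 0 ∨ lam (Fin.last k) ≠ 0) :
    -- `S_{a,d,k}^b` is the gluing of `S_{a,d,k}` and `⟨b⟩` by `μb`:
    (AddSubmonoid.closure ({x : ℕ × ℕ | ∃ i : ℕ, i ≤ k ∧ x = a + i • d} ∪ {b})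
        = Sadk a d k ⊔ AddSubmonoid.closure {b}) ∧
    μ • b ∈ Sadk a d k ∧ μ • b ∈ AddSubmonoid.closure ({b} : Set (ℕ × ℕ)) ∧
    (AddSubgroup.closure (cz '' {x : ℕ × ℕ | ∃ i : ℕ, i ≤ k ∧ x = a + i • d}) ⊓
        AddSubgroup.closure ({cz b} : Set (ℤ × ℤ))
      = AddSubgroup.zmultiples (cz (μ • b))) ∧
    -- the defining ideal of the extension:
    toricIdealExt 𝕜 a d b k =
      (toricIdeal 𝕜 a d k).map
          (rename (Fin.castSucc : Fin (k + 1) → Fin (k + 2)) :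
            MvPolynomial (Fin (k + 1)) 𝕜 →ₐ[𝕜] MvPolynomial (Fin (k + 2)) 𝕜) ⊔
        Ideal.span {(X (Fin.last (k + 1)) : MvPolynomial (Fin (k + 2)) 𝕜) ^ μ -
          ∏ i : Fin (k + 1), X (Fin.castSucc i) ^ lam i} := by
  classical
  refine ⟨AddSubmonoid.closure_union _ _, hμb,
    AddSubmonoid.mem_closure_singleton.mpr ⟨μ, rfl⟩,
    Glue.inter_eq hli hμpos hμmin hrep hlam, ?_⟩
  -- the ideal-theoretic statement
  have hfun : (Fin.lastCases (mono2 𝕜 b)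
        (fun i : Fin (k + 1) => mono2 𝕜 (a + (i : ℕ) • d)) : Fin (k + 2) → MvPolynomial (Fin 2) 𝕜)
      = fun j => mono2 𝕜 (Glue.gbig a d b k j) := by
    funext j
    induction j using Fin.lastCases with
    | last => rw [Fin.lastCases_last, Glue.gbig_last]
    | cast i => rw [Fin.lastCases_castSucc, Glue.gbig_castSucc]
  have hext : toricIdealExt 𝕜 a d b k
      = RingHom.ker ((aeval fun j : Fin (k + 2) => mono2 𝕜 (Glue.gbig a d b k j)) :
          MvPolynomial (Fin (k + 2)) 𝕜 →ₐ[𝕜] MvPolynomial (Fin 2) 𝕜) := by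
    unfold toricIdealExt
    rw [hfun]
  rw [hext]
  apply le_antisymm
  · -- kernel ⊆ ideal
    intro f hf
    rw [RingHom.mem_ker] at hf
    have hF : ∀ (u : Fin (k + 2) →₀ ℕ) (c : 𝕜),
        ((aeval fun j : Fin (k + 2) => mono2 𝕜 (Glue.gbig a d b k j)) :
          MvPolynomial (Fin (k + 2)) 𝕜 →ₐ[𝕜] MvPolynomial (Fin 2) 𝕜) (monomial u c)
        = monomial (Glue.emb2 (∑ j ∈ u.support, u j • Glue.gbig a d b k j)) c := by
      intro u c
      rw [Glue.aeval_monomial_mono2, Glue.mono2_def, smul_monomial, smul_eq_mul, mul_one]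
    have hspan := Glue.ker_mem_span
      (fun u : Fin (k + 2) →₀ ℕ => Glue.emb2 (∑ j ∈ u.support, u j • Glue.gbig a d b k j))
      _ hF f.support.card f le_rfl hf
    have hle : Submodule.span 𝕜 {p : MvPolynomial (Fin (k + 2)) 𝕜 |
          ∃ u v, Glue.emb2 (∑ j ∈ u.support, u j • Glue.gbig a d b k j)
              = Glue.emb2 (∑ j ∈ v.support, v j • Glue.gbig a d b k j)
            ∧ p = monomial u 1 - monomial v 1}
        ≤ Submodule.restrictScalars 𝕜
            (((toricIdeal 𝕜 a d k).map
                (rename (Fin.castSucc : Fin (k + 1) → Fin (k + 2)) :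
                  MvPolynomial (Fin (k + 1)) 𝕜 →ₐ[𝕜] MvPolynomial (Fin (k + 2)) 𝕜) ⊔
              Ideal.span {(X (Fin.last (k + 1)) : MvPolynomial (Fin (k + 2)) 𝕜) ^ μ -
                ∏ i : Fin (k + 1), X (Fin.castSucc i) ^ lam i} : Ideal _)) := by
      rw [Submodule.span_le]
      rintro p ⟨u, v, hψ, rfl⟩
      exact Glue.binomial_mem hli hb hμpos hμmin hrep hlam u v (Glue.emb2_injective hψ)
    exact hle hspan
  · -- ideal ⊆ kernel
    refine sup_le ?_ ?_
    · rw [Ideal.map_le_iff_le_comap]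
      intro p hp
      rw [Ideal.mem_comap, RingHom.mem_ker]
      have hcomp : ((aeval fun j : Fin (k + 2) => mono2 𝕜 (Glue.gbig a d b k j)) :
            MvPolynomial (Fin (k + 2)) 𝕜 →ₐ[𝕜] MvPolynomial (Fin 2) 𝕜)
            ((rename (Fin.castSucc : Fin (k + 1) → Fin (k + 2)) :
              MvPolynomial (Fin (k + 1)) 𝕜 →ₐ[𝕜] MvPolynomial (Fin (k + 2)) 𝕜) p)
          = ((aeval fun i : Fin (k + 1) => mono2 𝕜 (a + (i : ℕ) • d)) :
              MvPolynomial (Fin (k + 1)) 𝕜 →ₐ[𝕜] MvPolynomial (Fin 2) 𝕜) p := by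
        rw [show ((rename (Fin.castSucc : Fin (k + 1) → Fin (k + 2)) :
            MvPolynomial (Fin (k + 1)) 𝕜 →ₐ[𝕜] MvPolynomial (Fin (k + 2)) 𝕜) p)
          = rename Fin.castSucc p from rfl, aeval_rename,
          show ((fun j => mono2 𝕜 (Glue.gbig a d b k j)) ∘ Fin.castSucc)
              = fun i : Fin (k + 1) => mono2 𝕜 (a + (i : ℕ) • d) from
            funext fun i => by simp only [Function.comp_apply, Glue.gbig_castSucc]]
      rw [hcomp]
      have hp' : ((aeval fun i : Fin (k + 1) => mono2 𝕜 (a + (i : ℕ) • d)) :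
          MvPolynomial (Fin (k + 1)) 𝕜 →ₐ[𝕜] MvPolynomial (Fin 2) 𝕜) p = 0 := by
        have := hp
        unfold toricIdeal at this
        rwa [RingHom.mem_ker] at this
      exact hp'
    · rw [Ideal.span_le]
      rintro q hq
      rw [Set.mem_singleton_iff] at hq
      subst hq
      rw [SetLike.mem_coe, RingHom.mem_ker, map_sub, map_pow, aeval_X, Glue.gbig_last]
      have h2 : ((aeval fun j : Fin (k + 2) => mono2 𝕜 (Glue.gbig a d b k j)) :
            MvPolynomial (Fin (k + 2)) 𝕜 →ₐ[𝕜] MvPolynomial (Fin 2) 𝕜)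
            (∏ i : Fin (k + 1), X (Fin.castSucc i) ^ lam i)
          = mono2 𝕜 (μ • b) := by
        rw [map_prod, hrep, Glue.mono2_sum]
        refine Finset.prod_congr rfl fun i _ => ?_
        rw [map_pow, aeval_X, Glue.gbig_castSucc, Glue.mono2_pow]
      rw [h2, ← Glue.mono2_pow, sub_self]
end
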